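/- arXiv:1706.03658 — 9 statements merged into one kernel-verified Lean document; each statement's English description precedes it below -/
import Mathlib

section
/- Let μ be a Borel measure on ℝ such that μ(C) = 0 for every countable set C ⊆ ℝ, and such that μ(B) < ∞ for every bounded Borel set B. Let H ⊆ ℝ be a bounded Borel set with 0 < μ(H) < ∞, and let H' denote the set of accumulation points of H (points x such that every neighborhood of x meets H \ {x}). If H' contains at least two points, then sInf H' < M^μ(H) < sSup H'. -/
open MeasureTheory Set Filter Topology

noncomputable def meanByMeasure (μ : Measure ℝ) (H : Set ℝ) : ℝ :=
  (∫ x in H, x ∂μ) / (μ H).toReal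

lemma countable_nonacc (H : Set ℝ) : {x ∈ H | ¬AccPt x (𝓟 H)}.Countable := by
  obtain ⟨b, bct, -, bbasis⟩ := TopologicalSpace.exists_countable_basis ℝ
  have hsub : {x ∈ H | ¬AccPt x (𝓟 H)} ⊆ ⋃ U ∈ {U ∈ b | (U ∩ H).Subsingleton}, U ∩ H := by
    intro x hx
    have hx2 := hx.2
    rw [accPt_iff_nhds] at hx2
    push_neg at hx2
    obtain ⟨U, hU, hUx⟩ := hx2
    obtain ⟨U', hU'b, hxU', hU'U⟩ := bbasis.mem_nhds_iff.1 hU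
    have hss : (U' ∩ H).Subsingleton := by
      intro y hy z hz
      rw [hUx y ⟨hU'U hy.1, hy.2⟩, hUx z ⟨hU'U hz.1, hz.2⟩]
    exact Set.mem_biUnion ⟨hU'b, hss⟩ ⟨hxU', hx.1⟩
  exact Set.Countable.mono hsub
    ((bct.mono (Set.sep_subset _ _)).biUnion fun U hU => hU.2.countable)

theorem meanByMeasure_strict_strong_internal (μ : Measure ℝ)
    (hcount : ∀ C : Set ℝ, C.Countable → μ C = 0)
    (hfinb : ∀ B : Set ℝ, Bornology.IsBounded B → MeasurableSet B → μ B < ⊤)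
    (H : Set ℝ) (hHb : Bornology.IsBounded H) (hHm : MeasurableSet H)
    (hpos : 0 < μ H) (hfin : μ H < ⊤)
    (H' : Set ℝ) (hH' : H' = {x : ℝ | AccPt x (𝓟 H)})
    (htwo : ∃ a ∈ H', ∃ b ∈ H', a ≠ b) :
    sInf H' < meanByMeasure μ H ∧ meanByMeasure μ H < sSup H' := by
  obtain ⟨p, hp, q, hq, hpq⟩ := htwo
  have hsub : H' ⊆ closure H := by
    intro x hx
    rw [hH'] at hx
    have := (accPt_principal_iff_clusterPt (x := x) (C := H)).1 hx
    exact closure_mono diff_subset (mem_closure_iff_clusterPt.2 this)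
  have hbA : BddAbove H' := (hHb.closure.bddAbove).mono hsub
  have hbB : BddBelow H' := (hHb.closure.bddBelow).mono hsub
  set a := sInf H' with ha
  set b := sSup H' with hb
  have hap : a ≤ p := csInf_le hbB hp
  have haq : a ≤ q := csInf_le hbB hq
  have hpb : p ≤ b := le_csSup hbA hp
  have hqb : q ≤ b := le_csSup hbA hq
  have hab : a < b := by
    rcases lt_or_gt_of_ne hpq with h | h
    · exact lt_of_le_of_lt hap (lt_of_lt_of_le h hqb)
    · exact lt_of_le_of_lt haq (lt_of_lt_of_le h hpb)
  -- a.e. membership in H'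
  have hnull : μ (H \ H') = 0 := by
    have : H \ H' = {x ∈ H | ¬AccPt x (𝓟 H)} := by
      ext x; simp [hH']
    rw [this]
    exact hcount _ (countable_nonacc H)
  have hnull' : μ.restrict H (H \ H') = 0 :=
    le_antisymm (le_trans (Measure.restrict_le_self _) hnull.le) (zero_le)
  have hae : ∀ᵐ x ∂(μ.restrict H), x ∈ H' := by
    have h1 : ∀ᵐ x ∂(μ.restrict H), x ∈ H := ae_restrict_mem hHm
    have h2 : ∀ᵐ x ∂(μ.restrict H), x ∉ H \ H' := measure_eq_zero_iff_ae_notMem.1 hnull'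
    filter_upwards [h1, h2] with x hx1 hx2
    by_contra h
    exact hx2 ⟨hx1, h⟩
  have hub : ∀ᵐ x ∂(μ.restrict H), x ≤ b := hae.mono fun x hx => le_csSup hbA hx
  have hlb : ∀ᵐ x ∂(μ.restrict H), a ≤ x := hae.mono fun x hx => csInf_le hbB hx
  -- integrability
  obtain ⟨R, hR⟩ := hHb.exists_norm_le
  have hint : IntegrableOn (fun x : ℝ => x) H μ := by
    apply Measure.integrableOn_of_bounded hfin.ne aestronglyMeasurable_id (M := R)
    filter_upwards [ae_restrict_mem hHm] with x hx using hR x hx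
  have hcint : ∀ c : ℝ, IntegrableOn (fun _ : ℝ => c) H μ := fun c =>
    integrableOn_const hfin.ne
  have htR : 0 < (μ H).toReal := ENNReal.toReal_pos hpos.ne' hfin.ne
  have hsingle : ∀ c : ℝ, μ.restrict H ({c}ᶜ) > 0 := by
    intro c
    have h1 : μ.restrict H ({c}ᶜ) = μ (H \ {c}) := by
      rw [Measure.restrict_apply (measurableSet_singleton c).compl, Set.inter_comm,
        ← Set.diff_eq]
    rw [h1, measure_diff_null (hcount {c} (countable_singleton c))]
    exact hpos
  constructor
  · -- a < mean
    have hposint : 0 < ∫ x in H, (x - a) ∂μ := by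
      rw [integral_pos_iff_support_of_nonneg_ae
        (hlb.mono fun x hx => sub_nonneg.2 hx) (hint.sub (hcint a))]
      have : Function.support (fun x : ℝ => x - a) = {a}ᶜ := by
        ext x; simp [Function.support, sub_eq_zero]
      rw [this]
      exact hsingle a
    have heq : ∫ x in H, (x - a) ∂μ = (∫ x in H, x ∂μ) - (μ H).toReal * a := by
      rw [integral_sub hint (hcint a), setIntegral_const, smul_eq_mul, measureReal_def]
    rw [heq, sub_pos] at hposint
    rw [meanByMeasure, lt_div_iff₀ htR, mul_comm]
    exact hposint
  · -- mean < b
    have hposint : 0 < ∫ x in H, (b - x) ∂μ := by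
      rw [integral_pos_iff_support_of_nonneg_ae
        (hub.mono fun x hx => sub_nonneg.2 hx) ((hcint b).sub hint)]
      have : Function.support (fun x : ℝ => b - x) = {b}ᶜ := by
        ext x; simp [Function.support, sub_eq_zero]; exact ne_comm
      rw [this]
      exact hsingle b
    have heq : ∫ x in H, (b - x) ∂μ = (μ H).toReal * b - (∫ x in H, x ∂μ) := by
      rw [integral_sub (hcint b) hint, setIntegral_const, smul_eq_mul, measureReal_def]
    rw [heq, sub_pos] at hposint
    rw [meanByMeasure, div_lt_iff₀ htR, mul_comm]
    exact hposint
end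

section
/- Let I ⊆ ℝ be a bounded interval and μ a Borel measure on ℝ with μ(I) < ∞. Then for every Borel set H₁ ⊆ I with 0 < μ(H₁) and every ε > 0 there exists δ > 0 such that: for every Borel set H₂ ⊆ I with 0 < μ(H₂), if μ((H₁ \ H₂) ∪ (H₂ \ H₁)) < δ, then |M^μ(H₁) − M^μ(H₂)| < ε. In other words, M^μ is continuous with respect to the pseudo-metric d_μ(H₁,H₂) = μ(H₁ Δ H₂) on subsets of a bounded interval. -/
open MeasureTheory Set Filter

theorem meanByMeasure_continuous_in_symmDiff_pseudometric (μ : Measure ℝ) (I : Set ℝ)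
    (hI : I.OrdConnected) (hIb : Bornology.IsBounded I) (hIfin : μ I < ⊤)
    (H₁ : Set ℝ) (hH₁I : H₁ ⊆ I) (hH₁m : MeasurableSet H₁) (h₁pos : 0 < μ H₁)
    (ε : ℝ) (hε : 0 < ε) :
    ∃ δ : ℝ, 0 < δ ∧ ∀ H₂ : Set ℝ, H₂ ⊆ I → MeasurableSet H₂ → 0 < μ H₂ →
      μ ((H₁ \ H₂) ∪ (H₂ \ H₁)) < ENNReal.ofReal δ →
      |meanByMeasure μ H₁ - meanByMeasure μ H₂| < ε := by
  obtain ⟨C₀, hC₀⟩ := isBounded_iff_forall_norm_le.mp hIb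
  set C : ℝ := max C₀ 0 with hCdef
  have hC : ∀ x ∈ I, ‖x‖ ≤ C := fun x hx => (hC₀ x hx).trans (le_max_left _ _)
  have hCnn : 0 ≤ C := le_max_right _ _
  have hμH₁fin : μ H₁ < ⊤ := lt_of_le_of_lt (measure_mono hH₁I) hIfin
  set m₁ : ℝ := (μ H₁).toReal with hm₁def
  have hm₁ : 0 < m₁ := ENNReal.toReal_pos h₁pos.ne' hμH₁fin.ne
  refine ⟨ε * m₁ / (2 * (C + 1)), by positivity, ?_⟩
  intro H₂ hH₂I hH₂m h₂pos hd
  have hμH₂fin : μ H₂ < ⊤ := lt_of_le_of_lt (measure_mono hH₂I) hIfin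
  set m₂ : ℝ := (μ H₂).toReal with hm₂def
  have hm₂ : 0 < m₂ := ENNReal.toReal_pos h₂pos.ne' hμH₂fin.ne
  have hSsub : (H₁ \ H₂) ∪ (H₂ \ H₁) ⊆ I := by
    rintro x (hx | hx)
    · exact hH₁I hx.1
    · exact hH₂I hx.1
  have hdfin : μ ((H₁ \ H₂) ∪ (H₂ \ H₁)) < ⊤ := lt_of_le_of_lt (measure_mono hSsub) hIfin
  set dr : ℝ := (μ ((H₁ \ H₂) ∪ (H₂ \ H₁))).toReal with hdrdef
  have hdrnn : 0 ≤ dr := ENNReal.toReal_nonneg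
  have hdr : dr * (2 * (C + 1)) < ε * m₁ := by
    have h1 : dr < ε * m₁ / (2 * (C + 1)) :=
      (ENNReal.lt_ofReal_iff_toReal_lt hdfin.ne).mp hd
    have h2 : (0:ℝ) < 2 * (C + 1) := by positivity
    calc dr * (2 * (C + 1)) < ε * m₁ / (2 * (C + 1)) * (2 * (C + 1)) :=
          mul_lt_mul_of_pos_right h1 h2
      _ = ε * m₁ := by field_simp
  -- integrability of the identity on subsets of I
  have hint : ∀ S : Set ℝ, S ⊆ I → MeasurableSet S → IntegrableOn (fun x => x) S μ := by
    intro S hSI hSm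
    exact Measure.integrableOn_of_bounded (M := C)
      (lt_of_le_of_lt (measure_mono hSI) hIfin).ne measurable_id.aestronglyMeasurable
      ((ae_restrict_mem hSm).mono fun x hx => hC x (hSI hx))
  -- splitting of integrals
  set a : ℝ := ∫ x in H₁, x ∂μ with hadef
  set b : ℝ := ∫ x in H₂, x ∂μ with hbdef
  have hsplit : ∀ s t : Set ℝ, s ⊆ I → MeasurableSet s → MeasurableSet t →
      (∫ x in s, x ∂μ) = (∫ x in s ∩ t, x ∂μ) + ∫ x in s \ t, x ∂μ := by
    intro s t hsI hsm htm
    rw [← setIntegral_union (disjoint_sdiff_right.mono_left inter_subset_right)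
      (hsm.diff htm) (hint _ (fun x hx => hsI hx.1) (hsm.inter htm))
      (hint _ (fun x hx => hsI hx.1) (hsm.diff htm)), Set.inter_union_diff]
  have hab_eq : a - b = (∫ x in H₁ \ H₂, x ∂μ) - ∫ x in H₂ \ H₁, x ∂μ := by
    rw [hadef, hbdef, hsplit H₁ H₂ hH₁I hH₁m hH₂m, hsplit H₂ H₁ hH₂I hH₂m hH₁m,
      Set.inter_comm H₂ H₁]
    ring
  -- bounds on integrals
  have hIb1 : |∫ x in H₁ \ H₂, x ∂μ| ≤ C * (μ (H₁ \ H₂)).toReal :=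
    norm_setIntegral_le_of_norm_le_const
      (lt_of_le_of_lt (measure_mono fun x hx => hH₁I hx.1) hIfin)
      (fun x hx => hC x (hH₁I hx.1))
  have hIb2 : |∫ x in H₂ \ H₁, x ∂μ| ≤ C * (μ (H₂ \ H₁)).toReal :=
    norm_setIntegral_le_of_norm_le_const
      (lt_of_le_of_lt (measure_mono fun x hx => hH₂I hx.1) hIfin)
      (fun x hx => hC x (hH₂I hx.1))
  have hdsum : dr = (μ (H₁ \ H₂)).toReal + (μ (H₂ \ H₁)).toReal := by
    rw [hdrdef, measure_union disjoint_sdiff_sdiff (hH₂m.diff hH₁m),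
      ENNReal.toReal_add]
    · exact (lt_of_le_of_lt (measure_mono fun x hx => hH₁I hx.1) hIfin).ne
    · exact (lt_of_le_of_lt (measure_mono fun x hx => hH₂I hx.1) hIfin).ne
  have hab : |a - b| ≤ C * dr := by
    rw [hab_eq, hdsum, mul_add]
    exact (abs_sub _ _).trans (add_le_add hIb1 hIb2)
  -- bound on b
  have hb : |b| ≤ C * m₂ :=
    norm_setIntegral_le_of_norm_le_const hμH₂fin
      (fun x hx => hC x (hH₂I hx))
  -- |m₂ - m₁| ≤ dr
  have hmono : ∀ s t : Set ℝ, μ t < ⊤ → s ⊆ t ∪ ((H₁ \ H₂) ∪ (H₂ \ H₁)) →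
      μ s < ⊤ → (μ s).toReal ≤ (μ t).toReal + dr := by
    intro s t htfin hsub hsfin
    rw [hdrdef, ← ENNReal.toReal_add htfin.ne hdfin.ne]
    exact ENNReal.toReal_le_toReal hsfin.ne
      (by simp [ENNReal.add_ne_top, htfin.ne, hdfin.ne])
      |>.mpr ((measure_mono hsub).trans (measure_union_le _ _))
  have hm12 : m₁ ≤ m₂ + dr :=
    hmono H₁ H₂ hμH₂fin (fun x hx => by by_cases h : x ∈ H₂ <;> simp [hx, h]) hμH₁fin
  have hm21 : m₂ ≤ m₁ + dr :=
    hmono H₂ H₁ hμH₁fin (fun x hx => by by_cases h : x ∈ H₁ <;> simp [hx, h]) hμH₂fin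
  have hm : |m₂ - m₁| ≤ dr := abs_sub_le_iff.mpr ⟨by linarith, by linarith⟩
  -- final computation
  show |a / m₁ - b / m₂| < ε
  have heq : a / m₁ - b / m₂ = ((a - b) * m₂ + b * (m₂ - m₁)) / (m₁ * m₂) := by
    field_simp
    ring
  rw [heq, abs_div, abs_of_pos (mul_pos hm₁ hm₂), div_lt_iff₀ (mul_pos hm₁ hm₂)]
  have hX : |(a - b) * m₂ + b * (m₂ - m₁)| ≤ |a - b| * m₂ + |b| * |m₂ - m₁| := by
    calc |(a - b) * m₂ + b * (m₂ - m₁)| ≤ |(a - b) * m₂| + |b * (m₂ - m₁)| := abs_add_le _ _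
      _ = |a - b| * m₂ + |b| * |m₂ - m₁| := by rw [abs_mul, abs_mul, abs_of_pos hm₂]
  have t1 : |a - b| * m₂ ≤ C * dr * m₂ := mul_le_mul_of_nonneg_right hab hm₂.le
  have t2 : |b| * |m₂ - m₁| ≤ C * m₂ * dr :=
    mul_le_mul hb hm (abs_nonneg _) (by positivity)
  nlinarith [mul_lt_mul_of_pos_right hdr hm₂, mul_nonneg hdrnn hm₂.le]
end

section
/- Let μ and ν be Borel measures on ℝ that are finite on bounded Borel sets and strictly positive on nondegenerate intervals. Suppose that for every bounded Borel set H ⊆ ℝ one has 0 < μ(H) if and only if 0 < ν(H), and that M^μ(H) = M^ν(H) for every bounded Borel H with 0 < μ(H) < ∞ and 0 < ν(H) < ∞. Then there exists a real constant c > 0 such that ν = c·μ. -/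
open MeasureTheory Set Filter

lemma integrableOn_id_aux (μ : Measure ℝ)
    (hfin : ∀ B : Set ℝ, Bornology.IsBounded B → MeasurableSet B → μ B < ⊤)
    {H : Set ℝ} (hb : Bornology.IsBounded H) (hm : MeasurableSet H) :
    IntegrableOn (fun x : ℝ => x) H μ := by
  obtain ⟨r, hr⟩ := (Metric.isBounded_iff_subset_closedBall 0).mp hb
  apply Measure.integrableOn_of_bounded (M := |r|) (hfin H hb hm).ne aestronglyMeasurable_id
  refine (ae_restrict_iff' hm).mpr (ae_of_all _ fun x hx => ?_)
  have h := hr hx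
  rw [Real.closedBall_eq_Icc, zero_sub, zero_add] at h
  rw [Real.norm_eq_abs, abs_le]; simp only [id_eq]
  exact ⟨by linarith [le_abs_self r, h.1], by linarith [le_abs_self r, h.2]⟩

lemma mean_bounds_aux (μ : Measure ℝ) {H : Set ℝ} {a b : ℝ} (hm : MeasurableSet H)
    (hsub : H ⊆ Icc a b) (hpos : 0 < μ H) (hfin : μ H < ⊤)
    (hint : IntegrableOn (fun x : ℝ => x) H μ) :
    a ≤ meanByMeasure μ H ∧ meanByMeasure μ H ≤ b := by
  have hT : 0 < (μ H).toReal := ENNReal.toReal_pos hpos.ne' hfin.ne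
  have hca : IntegrableOn (fun _ : ℝ => a) H μ := (integrableOn_const_iff (by finiteness)).mpr (Or.inr hfin)
  have hcb : IntegrableOn (fun _ : ℝ => b) H μ := (integrableOn_const_iff (by finiteness)).mpr (Or.inr hfin)
  have h1 : a * (μ H).toReal ≤ ∫ x in H, x ∂μ := by
    have := setIntegral_mono_on hca hint hm (fun x hx => (hsub hx).1)
    rwa [setIntegral_const, smul_eq_mul, mul_comm] at this
  have h2 : ∫ x in H, x ∂μ ≤ b * (μ H).toReal := by
    have := setIntegral_mono_on hint hcb hm (fun x hx => (hsub hx).2)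
    rwa [setIntegral_const, smul_eq_mul, mul_comm] at this
  exact ⟨(le_div_iff₀ hT).mpr h1, (div_le_iff₀ hT).mpr h2⟩

theorem meanByMeasure_unique (μ ν : Measure ℝ)
    (hμfin : ∀ B : Set ℝ, Bornology.IsBounded B → MeasurableSet B → μ B < ⊤)
    (hνfin : ∀ B : Set ℝ, Bornology.IsBounded B → MeasurableSet B → ν B < ⊤)
    (hμpos : ∀ a b : ℝ, a < b → 0 < μ (Ioo a b))
    (hνpos : ∀ a b : ℝ, a < b → 0 < ν (Ioo a b))
    (hiff : ∀ H : Set ℝ, Bornology.IsBounded H → MeasurableSet H →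
      (0 < μ H ↔ 0 < ν H))
    (heq : ∀ H : Set ℝ, Bornology.IsBounded H → MeasurableSet H →
      0 < μ H → μ H < ⊤ → 0 < ν H → ν H < ⊤ →
      meanByMeasure μ H = meanByMeasure ν H) :
    ∃ c : ℝ, 0 < c ∧ ν = ENNReal.ofReal c • μ := by
  -- key lemma: disjoint sets with different μ-means have proportional measures
  have key : ∀ H K : Set ℝ, Bornology.IsBounded H → MeasurableSet H →
      Bornology.IsBounded K → MeasurableSet K → Disjoint H K →
      0 < μ H → 0 < μ K → meanByMeasure μ H ≠ meanByMeasure μ K →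
      (ν H).toReal * (μ K).toReal = (ν K).toReal * (μ H).toReal := by
    intro H K hbH hmH hbK hmK hdisj hμH hμK hne
    have hνH : 0 < ν H := (hiff H hbH hmH).mp hμH
    have hνK : 0 < ν K := (hiff K hbK hmK).mp hμK
    have hμHf := hμfin H hbH hmH
    have hμKf := hμfin K hbK hmK
    have hνHf := hνfin H hbH hmH
    have hνKf := hνfin K hbK hmK
    set A := (μ H).toReal with hA
    set B := (μ K).toReal with hB
    set A' := (ν H).toReal with hA'
    set B' := (ν K).toReal with hB'
    have hApos : 0 < A := ENNReal.toReal_pos hμH.ne' hμHf.ne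
    have hBpos : 0 < B := ENNReal.toReal_pos hμK.ne' hμKf.ne
    have hA'pos : 0 < A' := ENNReal.toReal_pos hνH.ne' hνHf.ne
    have hB'pos : 0 < B' := ENNReal.toReal_pos hνK.ne' hνKf.ne
    set m1 := meanByMeasure μ H with hm1
    set m2 := meanByMeasure μ K with hm2
    have hintμH := integrableOn_id_aux μ hμfin hbH hmH
    have hintμK := integrableOn_id_aux μ hμfin hbK hmK
    have hintνH := integrableOn_id_aux ν hνfin hbH hmH
    have hintνK := integrableOn_id_aux ν hνfin hbK hmK
    -- mean equalities on H and K
    have heqH := heq H hbH hmH hμH hμHf hνH hνHf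
    have heqK := heq K hbK hmK hμK hμKf hνK hνKf
    -- express integrals in terms of means
    have hIH : (∫ x in H, x ∂μ) = m1 * A := by
      rw [hm1, meanByMeasure, div_mul_cancel₀ _ hApos.ne']
    have hIK : (∫ x in K, x ∂μ) = m2 * B := by
      rw [hm2, meanByMeasure, div_mul_cancel₀ _ hBpos.ne']
    have hIH' : (∫ x in H, x ∂ν) = m1 * A' := by
      rw [hm1, heqH, meanByMeasure, div_mul_cancel₀ _ hA'pos.ne']
    have hIK' : (∫ x in K, x ∂ν) = m2 * B' := by
      rw [hm2, heqK, meanByMeasure, div_mul_cancel₀ _ hB'pos.ne']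
    -- the union
    have hbU : Bornology.IsBounded (H ∪ K) := hbH.union hbK
    have hmU : MeasurableSet (H ∪ K) := hmH.union hmK
    have hμU : μ (H ∪ K) = μ H + μ K := measure_union hdisj hmK
    have hνU : ν (H ∪ K) = ν H + ν K := measure_union hdisj hmK
    have hμUpos : 0 < μ (H ∪ K) := lt_of_lt_of_le hμH (measure_mono subset_union_left)
    have hνUpos : 0 < ν (H ∪ K) := lt_of_lt_of_le hνH (measure_mono subset_union_left)
    have hμUf := hμfin _ hbU hmU
    have hνUf := hνfin _ hbU hmU
    have hμUr : (μ (H ∪ K)).toReal = A + B := by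
      rw [hμU, ENNReal.toReal_add hμHf.ne hμKf.ne]
    have hνUr : (ν (H ∪ K)).toReal = A' + B' := by
      rw [hνU, ENNReal.toReal_add hνHf.ne hνKf.ne]
    have hIntU : (∫ x in H ∪ K, x ∂μ) = m1 * A + m2 * B := by
      rw [setIntegral_union hdisj hmK hintμH hintμK, hIH, hIK]
    have hIntU' : (∫ x in H ∪ K, x ∂ν) = m1 * A' + m2 * B' := by
      rw [setIntegral_union hdisj hmK hintνH hintνK, hIH', hIK']
    have heqU := heq _ hbU hmU hμUpos hμUf hνUpos hνUf
    rw [meanByMeasure, meanByMeasure, hIntU, hIntU', hμUr, hνUr] at heqU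
    have hABpos : (0:ℝ) < A + B := by linarith
    have hA'B'pos : (0:ℝ) < A' + B' := by linarith
    have hcross : (m1 * A + m2 * B) * (A' + B') = (m1 * A' + m2 * B') * (A + B) := by
      field_simp at heqU
      linarith [heqU]
    have hfac : (m1 - m2) * (A * B' - A' * B) = 0 := by linear_combination hcross
    have hdm : m1 - m2 ≠ 0 := sub_ne_zero.mpr hne
    have : A * B' - A' * B = 0 := by
      rcases mul_eq_zero.mp hfac with h | h
      · exact absurd h hdm
      · exact h
    linarith
  -- ratio lemma for arbitrary positive-measure bounded sets, via a far-away interval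
  have ratio : ∀ H K : Set ℝ, Bornology.IsBounded H → MeasurableSet H →
      Bornology.IsBounded K → MeasurableSet K → 0 < μ H → 0 < μ K →
      (ν H).toReal * (μ K).toReal = (ν K).toReal * (μ H).toReal := by
    intro H K hbH hmH hbK hmK hμH hμK
    obtain ⟨r, hr⟩ := (Metric.isBounded_iff_subset_closedBall 0).mp (hbH.union hbK)
    set R := |r| with hR
    have hsubU : H ∪ K ⊆ Icc (-R) R := by
      intro x hx
      have h := hr hx
      rw [Real.closedBall_eq_Icc, zero_sub, zero_add] at h
      exact ⟨by linarith [le_abs_self r, h.1], by linarith [le_abs_self r, h.2]⟩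
    have hsubH : H ⊆ Icc (-R) R := fun x hx => hsubU (Or.inl hx)
    have hsubK : K ⊆ Icc (-R) R := fun x hx => hsubU (Or.inr hx)
    set J := Ioo (R + 1) (R + 2) with hJ
    have hbJ : Bornology.IsBounded J := Metric.isBounded_Ioo _ _
    have hmJ : MeasurableSet J := measurableSet_Ioo
    have hμJ : 0 < μ J := hμpos _ _ (by linarith)
    have hμJf := hμfin J hbJ hmJ
    have hνJ : 0 < ν J := (hiff J hbJ hmJ).mp hμJ
    have hνJf := hνfin J hbJ hmJ
    have hsubJ : J ⊆ Icc (R + 1) (R + 2) := Ioo_subset_Icc_self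
    have hdisjH : Disjoint H J := by
      rw [disjoint_left]
      intro x hxH hxJ
      exact absurd hxJ.1 (by linarith [(hsubH hxH).2])
    have hdisjK : Disjoint K J := by
      rw [disjoint_left]
      intro x hxK hxJ
      exact absurd hxJ.1 (by linarith [(hsubK hxK).2])
    have hmeanJ := mean_bounds_aux μ hmJ hsubJ hμJ hμJf (integrableOn_id_aux μ hμfin hbJ hmJ)
    have hmeanH := mean_bounds_aux μ hmH hsubH hμH (hμfin H hbH hmH)
      (integrableOn_id_aux μ hμfin hbH hmH)
    have hmeanK := mean_bounds_aux μ hmK hsubK hμK (hμfin K hbK hmK)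
      (integrableOn_id_aux μ hμfin hbK hmK)
    have hneH : meanByMeasure μ H ≠ meanByMeasure μ J := by
      intro h
      have := hmeanH.2
      have := hmeanJ.1
      linarith [h ▸ hmeanH.2]
    have hneK : meanByMeasure μ K ≠ meanByMeasure μ J := by
      intro h
      linarith [h ▸ hmeanK.2, hmeanJ.1]
    have e1 := key H J hbH hmH hbJ hmJ hdisjH hμH hμJ hneH
    have e2 := key K J hbK hmK hbJ hmJ hdisjK hμK hμJ hneK
    have hJne : (μ J).toReal ≠ 0 := (ENNReal.toReal_pos hμJ.ne' hμJf.ne).ne'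
    apply mul_right_cancel₀ hJne
    linear_combination (μ K).toReal * e1 - (μ H).toReal * e2
  -- the constant
  set I : Set ℝ := Ioo 0 1 with hI
  have hbI : Bornology.IsBounded I := Metric.isBounded_Ioo _ _
  have hmI : MeasurableSet I := measurableSet_Ioo
  have hμI : 0 < μ I := hμpos 0 1 one_pos
  have hνI : 0 < ν I := hνpos 0 1 one_pos
  have hμIf := hμfin I hbI hmI
  have hνIf := hνfin I hbI hmI
  have hμIr : 0 < (μ I).toReal := ENNReal.toReal_pos hμI.ne' hμIf.ne
  have hνIr : 0 < (ν I).toReal := ENNReal.toReal_pos hνI.ne' hνIf.ne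
  set c := (ν I).toReal / (μ I).toReal with hc
  have hcpos : 0 < c := div_pos hνIr hμIr
  refine ⟨c, hcpos, ?_⟩
  -- equality on bounded measurable sets
  have hbdd : ∀ B : Set ℝ, Bornology.IsBounded B → MeasurableSet B →
      ν B = ENNReal.ofReal c * μ B := by
    intro B hbB hmB
    rcases eq_or_lt_of_le (zero_le : 0 ≤ μ B) with h0 | hpos
    · have hν0 : ν B = 0 := by
        by_contra h
        have : 0 < ν B := pos_iff_ne_zero.mpr h
        have := (hiff B hbB hmB).mpr this
        rw [← h0] at this
        exact lt_irrefl _ this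
      rw [hν0, ← h0, mul_zero]
    · have e := ratio B I hbB hmB hbI hmI hpos hμI
      have hμBf := hμfin B hbB hmB
      have hνB : 0 < ν B := (hiff B hbB hmB).mp hpos
      have hνBf := hνfin B hbB hmB
      have hBr : (ν B).toReal = c * (μ B).toReal := by
        rw [hc]
        field_simp
        linarith [e]
      calc ν B = ENNReal.ofReal ((ν B).toReal) := (ENNReal.ofReal_toReal hνBf.ne).symm
        _ = ENNReal.ofReal (c * (μ B).toReal) := by rw [hBr]
        _ = ENNReal.ofReal c * ENNReal.ofReal ((μ B).toReal) :=
            ENNReal.ofReal_mul hcpos.le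
        _ = ENNReal.ofReal c * μ B := by rw [ENNReal.ofReal_toReal hμBf.ne]
  -- extend to all measurable sets
  ext s hs
  have hcover : s = ⋃ n : ℕ, s ∩ Icc (-(n:ℝ)) n := by
    ext x
    simp only [mem_iUnion, mem_inter_iff, mem_Icc]
    constructor
    · intro hx
      refine ⟨⌈|x|⌉₊, hx, ?_, ?_⟩
      · linarith [Nat.le_ceil |x|, neg_abs_le x]
      · linarith [Nat.le_ceil |x|, le_abs_self x]
    · rintro ⟨n, hx, -⟩
      exact hx
  have hmono : Monotone (fun n : ℕ => s ∩ Icc (-(n:ℝ)) n) := by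
    intro m n hmn
    apply inter_subset_inter_right
    apply Icc_subset_Icc
    · simp only [neg_le_neg_iff, Nat.cast_le]; exact hmn
    · exact_mod_cast hmn
  have hdir : Directed (fun x1 x2 : Set ℝ => x1 ⊆ x2) (fun n : ℕ => s ∩ Icc (-(n:ℝ)) n) :=
    hmono.directed_le
  have hpiece : ∀ n : ℕ, ν (s ∩ Icc (-(n:ℝ)) n) = ENNReal.ofReal c * μ (s ∩ Icc (-(n:ℝ)) n) :=
    fun n => hbdd _ ((Metric.isBounded_Icc _ _).subset inter_subset_right)
      (hs.inter measurableSet_Icc)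
  rw [Measure.smul_apply, smul_eq_mul]
  calc ν s = ν (⋃ n : ℕ, s ∩ Icc (-(n:ℝ)) n) := by rw [← hcover]
    _ = ⨆ n : ℕ, ν (s ∩ Icc (-(n:ℝ)) n) := hdir.measure_iUnion
    _ = ⨆ n : ℕ, ENNReal.ofReal c * μ (s ∩ Icc (-(n:ℝ)) n) := by
        exact iSup_congr hpiece
    _ = ENNReal.ofReal c * ⨆ n : ℕ, μ (s ∩ Icc (-(n:ℝ)) n) := (ENNReal.mul_iSup _ _).symm
    _ = ENNReal.ofReal c * μ (⋃ n : ℕ, s ∩ Icc (-(n:ℝ)) n) := by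
        rw [hdir.measure_iUnion]
    _ = ENNReal.ofReal c * μ s := by rw [← hcover]
end

section
/- Let f : ℝ → ℝ be differentiable and monotone increasing, and let F : ℝ → ℝ satisfy F' = f. Then for all real a < b with f(a) < f(b), the quantity K(a,b) = (b·f(b) − a·f(a) − (F(b) − F(a)))/(f(b) − f(a)) satisfies a < K(a,b) < b; i.e. this formula defines a strictly internal continuous ordinary mean. -/
theorem formula_defines_strictly_internal_mean (f F : ℝ → ℝ)
    (hf : Differentiable ℝ f) (hmono : Monotone f)
    (hF : ∀ x : ℝ, HasDerivAt F (f x) x) :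
    ∀ a b : ℝ, a < b → f a < f b →
      a < (b * f b - a * f a - (F b - F a)) / (f b - f a) ∧
      (b * f b - a * f a - (F b - F a)) / (f b - f a) < b := by
  intro a b hab hfab
  have hcont : Continuous f := hf.continuous
  have hFi : F b - F a = ∫ x in a..b, f x := by
    rw [intervalIntegral.integral_eq_sub_of_hasDerivAt (fun x _ => hF x)
      (hcont.intervalIntegrable a b)]
  have h1 : (∫ x in a..b, f x) < ∫ x in a..b, f b :=
    intervalIntegral.integral_lt_integral_of_continuousOn_of_le_of_exists_lt hab
      hcont.continuousOn continuousOn_const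
      (fun x hx => hmono hx.2) ⟨a, ⟨le_refl a, hab.le⟩, hfab⟩
  have h2 : (∫ x in a..b, (f a : ℝ)) < ∫ x in a..b, f x :=
    intervalIntegral.integral_lt_integral_of_continuousOn_of_le_of_exists_lt hab
      continuousOn_const hcont.continuousOn
      (fun x hx => hmono hx.1.le) ⟨b, ⟨hab.le, le_refl b⟩, hfab⟩
  rw [intervalIntegral.integral_const] at h1 h2
  simp only [smul_eq_mul] at h1 h2
  have hd : 0 < f b - f a := sub_pos.2 hfab
  constructor
  · rw [lt_div_iff₀ hd]; nlinarith
  · rw [div_lt_iff₀ hd]; nlinarith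
end

section
/- There does not exist a Borel measure μ on ℝ with the following properties: μ(B) < ∞ for every bounded Borel set B, μ(J) > 0 for every nondegenerate interval J ⊆ (0,∞), and for every bounded Borel set H ⊆ (0,∞) with 0 < μ(H) and λ(log H) > 0 one has M^μ(H) = exp( (∫_{log H} y dλ)/λ(log H) ), where log H = {log h : h ∈ H}. In other words, the generalized mean H ↦ e^{Avg(log H)} is not a mean by measure. -/
open MeasureTheory Set Filter

private lemma log_image_Ioo' {x y : ℝ} (hx : 0 < x) (hxy : x < y) :
    Real.log '' Set.Ioo x y = Set.Ioo (Real.log x) (Real.log y) := by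
  ext t
  simp only [Set.mem_image, Set.mem_Ioo]
  constructor
  · rintro ⟨u, ⟨h1, h2⟩, rfl⟩
    exact ⟨Real.log_lt_log hx h1, Real.log_lt_log (hx.trans h1) h2⟩
  · rintro ⟨h1, h2⟩
    refine ⟨Real.exp t, ⟨?_, ?_⟩, Real.log_exp t⟩
    · calc x = Real.exp (Real.log x) := (Real.exp_log hx).symm
        _ < Real.exp t := Real.exp_lt_exp.2 h1
    · calc Real.exp t < Real.exp (Real.log y) := Real.exp_lt_exp.2 h2
        _ = y := Real.exp_log (hx.trans hxy)

private lemma integrableOn_id_Ioo' {μ : Measure ℝ} {x y : ℝ} (h : μ (Set.Ioo x y) ≠ ⊤) :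
    IntegrableOn (fun t : ℝ => t) (Set.Ioo x y) μ := by
  apply Measure.integrableOn_of_bounded (M := max |x| |y|) h aestronglyMeasurable_id
  refine (ae_restrict_iff' measurableSet_Ioo).2 (ae_of_all _ fun t ht => ?_)
  rw [Real.norm_eq_abs]
  exact abs_le_max_abs_abs ht.1.le ht.2.le

private lemma integral_id_Ioo' {x y : ℝ} (h : x ≤ y) :
    ∫ t in Set.Ioo x y, t = (y ^ 2 - x ^ 2) / 2 := by
  rw [← MeasureTheory.integral_Ioc_eq_integral_Ioo, ← intervalIntegral.integral_of_le h,
    integral_id]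

private lemma disjoint_Ioo' {a b c d : ℝ} (h : b ≤ c) :
    Disjoint (Set.Ioo a b) (Set.Ioo c d) := by
  rw [Set.disjoint_left]
  rintro z ⟨_, h2⟩ ⟨h3, _⟩
  linarith


private lemma sq_eq_two_lt_two {a : ℝ} (ha0 : 0 < a) (ha2 : a ^ 2 = 2) : a < 2 := by
  nlinarith

private lemma final_contra {a E : ℝ} (ha0 : 0 < a) (ha2 : a ^ 2 = 2) (hE0 : 0 < E)
    (hE6 : E ^ 6 = 131072) (h : 20 * a + 16 = E * (5 + a)) : False := by
  have h1 : 1.414 ≤ a := by nlinarith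
  have h2 : a ≤ 1.41422 := by nlinarith
  have h5a : (0 : ℝ) < 5 + a := by linarith
  have hEub : E ≤ 6.905 := by nlinarith
  have h6 : E ^ 6 ≤ 6.905 ^ 6 := pow_le_pow_left₀ hE0.le hEub 6
  rw [hE6] at h6
  norm_num at h6

set_option maxHeartbeats 1600000 in
theorem exp_avg_log_not_mean_by_measure :
    ¬ ∃ μ : Measure ℝ,
      (∀ B : Set ℝ, Bornology.IsBounded B → MeasurableSet B → μ B < ⊤) ∧
      (∀ a b : ℝ, 0 ≤ a → a < b → 0 < μ (Ioo a b)) ∧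
      (∀ H : Set ℝ, H ⊆ Ioi 0 → Bornology.IsBounded H → MeasurableSet H →
        0 < μ H → 0 < volume (Real.log '' H) →
        meanByMeasure μ H =
          Real.exp ((∫ y in Real.log '' H, y) / (volume (Real.log '' H)).toReal)) := by
  rintro ⟨μ, hfin, hpos, hmean⟩
  set L := Real.log 2 with hLdef
  have hL0 : 0 < L := Real.log_pos one_lt_two
  have hLne : L ≠ 0 := ne_of_gt hL0
  -- log values
  have l8 : Real.log 8 = 3 * L := by
    rw [show (8 : ℝ) = 2 ^ (3 : ℕ) by norm_num, Real.log_pow]; push_cast; ring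
  have l16 : Real.log 16 = 4 * L := by
    rw [show (16 : ℝ) = 2 ^ (4 : ℕ) by norm_num, Real.log_pow]; push_cast; ring
  have l32 : Real.log 32 = 5 * L := by
    rw [show (32 : ℝ) = 2 ^ (5 : ℕ) by norm_num, Real.log_pow]; push_cast; ring
  -- the three intervals
  set A : Set ℝ := Ioo 1 2 with hAdef
  set B : Set ℝ := Ioo 8 16 with hBdef
  set C : Set ℝ := Ioo 16 32 with hCdef
  have measA : MeasurableSet A := measurableSet_Ioo
  have measB : MeasurableSet B := measurableSet_Ioo
  have measC : MeasurableSet C := measurableSet_Ioo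
  have bddA : Bornology.IsBounded A := Metric.isBounded_Ioo _ _
  have bddB : Bornology.IsBounded B := Metric.isBounded_Ioo _ _
  have bddC : Bornology.IsBounded C := Metric.isBounded_Ioo _ _
  have subA : A ⊆ Ioi 0 := fun t ht => lt_trans one_pos ht.1
  have subB : B ⊆ Ioi 0 := fun t ht => lt_trans (by norm_num) ht.1
  have subC : C ⊆ Ioi 0 := fun t ht => lt_trans (by norm_num) ht.1
  have hfinA : μ A ≠ ⊤ := (hfin A bddA measA).ne
  have hfinB : μ B ≠ ⊤ := (hfin B bddB measB).ne
  have hfinC : μ C ≠ ⊤ := (hfin C bddC measC).ne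
  have hμA : 0 < μ A := hpos 1 2 (by norm_num) (by norm_num)
  have hμB : 0 < μ B := hpos 8 16 (by norm_num) (by norm_num)
  have hμC : 0 < μ C := hpos 16 32 (by norm_num) (by norm_num)
  have intA : IntegrableOn (fun t : ℝ => t) A μ := integrableOn_id_Ioo' hfinA
  have intB : IntegrableOn (fun t : ℝ => t) B μ := integrableOn_id_Ioo' hfinB
  have intC : IntegrableOn (fun t : ℝ => t) C μ := integrableOn_id_Ioo' hfinC
  have hdAB : Disjoint A B := disjoint_Ioo' (by norm_num)
  have hdAC : Disjoint A C := disjoint_Ioo' (by norm_num)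
  have hdBC : Disjoint B C := disjoint_Ioo' (by norm_num)
  have hdABC : Disjoint (A ∪ B) C := Disjoint.union_left hdAC hdBC
  -- real-valued masses and integrals
  set mA := (μ A).toReal with hmAdef
  set mB := (μ B).toReal with hmBdef
  set mC := (μ C).toReal with hmCdef
  have hmA0 : 0 < mA := ENNReal.toReal_pos hμA.ne' hfinA
  have hmB0 : 0 < mB := ENNReal.toReal_pos hμB.ne' hfinB
  have hmC0 : 0 < mC := ENNReal.toReal_pos hμC.ne' hfinC
  set IA := ∫ x in A, x ∂μ with hIAdef
  set IB := ∫ x in B, x ∂μ with hIBdef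
  set IC := ∫ x in C, x ∂μ with hICdef
  -- measure of unions (toReal)
  have tAC : (μ (A ∪ C)).toReal = mA + mC := by
    rw [measure_union hdAC measC, ENNReal.toReal_add hfinA hfinC]
  have tBC : (μ (B ∪ C)).toReal = mB + mC := by
    rw [measure_union hdBC measC, ENNReal.toReal_add hfinB hfinC]
  have tABC : (μ (A ∪ B ∪ C)).toReal = mA + mB + mC := by
    have hAB : μ (A ∪ B) ≠ ⊤ := (hfin _ (bddA.union bddB) (measA.union measB)).ne
    rw [measure_union hdABC measC, measure_union hdAB measB,
      ENNReal.toReal_add (measure_union hdAB measB ▸ hAB) hfinC,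
      ENNReal.toReal_add hfinA hfinB]
  -- integrals over unions
  have iAC : ∫ x in A ∪ C, x ∂μ = IA + IC := setIntegral_union hdAC measC intA intC
  have iBC : ∫ x in B ∪ C, x ∂μ = IB + IC := setIntegral_union hdBC measC intB intC
  have iABC : ∫ x in A ∪ B ∪ C, x ∂μ = IA + IB + IC := by
    rw [setIntegral_union hdABC measC (intA.union intB) intC,
      setIntegral_union hdAB measB intA intB]
  -- log images
  have imgA : Real.log '' A = Ioo 0 L := by
    rw [hAdef, log_image_Ioo' one_pos one_lt_two, Real.log_one]
  have imgB : Real.log '' B = Ioo (3 * L) (4 * L) := by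
    rw [hBdef, log_image_Ioo' (by norm_num) (by norm_num), l8, l16]
  have imgC : Real.log '' C = Ioo (4 * L) (5 * L) := by
    rw [hCdef, log_image_Ioo' (by norm_num) (by norm_num), l16, l32]
  have imgAC : Real.log '' (A ∪ C) = Ioo 0 L ∪ Ioo (4 * L) (5 * L) := by
    rw [Set.image_union, imgA, imgC]
  have imgBC : Real.log '' (B ∪ C) = Ioo (3 * L) (4 * L) ∪ Ioo (4 * L) (5 * L) := by
    rw [Set.image_union, imgB, imgC]
  have imgABC : Real.log '' (A ∪ B ∪ C) =
      Ioo 0 L ∪ Ioo (3 * L) (4 * L) ∪ Ioo (4 * L) (5 * L) := by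
    rw [Set.image_union, Set.image_union, imgA, imgB, imgC]
  -- disjointness of log images
  have hdSAC : Disjoint (Ioo (0:ℝ) L) (Ioo (4 * L) (5 * L)) := disjoint_Ioo' (by linarith)
  have hdSAB : Disjoint (Ioo (0:ℝ) L) (Ioo (3 * L) (4 * L)) := disjoint_Ioo' (by linarith)
  have hdSBC : Disjoint (Ioo (3 * L) (4 * L)) (Ioo (4 * L) (5 * L)) :=
    disjoint_Ioo' (by linarith)
  have hdSABC : Disjoint (Ioo (0:ℝ) L ∪ Ioo (3 * L) (4 * L)) (Ioo (4 * L) (5 * L)) :=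
    Disjoint.union_left hdSAC hdSBC
  -- volume integrability
  have vintA : IntegrableOn (fun t : ℝ => t) (Ioo (0:ℝ) L) volume :=
    integrableOn_id_Ioo' measure_Ioo_lt_top.ne
  have vintB : IntegrableOn (fun t : ℝ => t) (Ioo (3 * L) (4 * L)) volume :=
    integrableOn_id_Ioo' measure_Ioo_lt_top.ne
  have vintC : IntegrableOn (fun t : ℝ => t) (Ioo (4 * L) (5 * L)) volume :=
    integrableOn_id_Ioo' measure_Ioo_lt_top.ne
  -- volumes (toReal)
  have vtA : (volume (Ioo (0:ℝ) L)).toReal = L := by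
    rw [Real.volume_Ioo, ENNReal.toReal_ofReal (by linarith)]; ring
  have vtB : (volume (Ioo (3 * L) (4 * L))).toReal = L := by
    rw [Real.volume_Ioo, ENNReal.toReal_ofReal (by linarith)]; ring
  have vtC : (volume (Ioo (4 * L) (5 * L))).toReal = L := by
    rw [Real.volume_Ioo, ENNReal.toReal_ofReal (by linarith)]; ring
  have vtAC : (volume (Ioo (0:ℝ) L ∪ Ioo (4 * L) (5 * L))).toReal = 2 * L := by
    rw [measure_union hdSAC measurableSet_Ioo, ENNReal.toReal_add measure_Ioo_lt_top.ne measure_Ioo_lt_top.ne,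
      vtA, vtC]; ring
  have vtBC : (volume (Ioo (3 * L) (4 * L) ∪ Ioo (4 * L) (5 * L))).toReal = 2 * L := by
    rw [measure_union hdSBC measurableSet_Ioo, ENNReal.toReal_add measure_Ioo_lt_top.ne measure_Ioo_lt_top.ne,
      vtB, vtC]; ring
  have vtABC : (volume (Ioo (0:ℝ) L ∪ Ioo (3 * L) (4 * L) ∪ Ioo (4 * L) (5 * L))).toReal
      = 3 * L := by
    rw [measure_union hdSABC measurableSet_Ioo, measure_union hdSAB measurableSet_Ioo,
      ENNReal.toReal_add (ENNReal.add_lt_top.2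
        ⟨measure_Ioo_lt_top, measure_Ioo_lt_top⟩).ne measure_Ioo_lt_top.ne,
      ENNReal.toReal_add measure_Ioo_lt_top.ne measure_Ioo_lt_top.ne, vtA, vtB, vtC]; ring
  -- volume positivity of one basic block
  have vposIoo : ∀ u v : ℝ, u < v → 0 < volume (Ioo u v) := fun u v huv => by
    rw [Real.volume_Ioo]; exact ENNReal.ofReal_pos.2 (by linarith)
  -- integrals over log images
  have wA : ∫ y in Ioo (0:ℝ) L, y = (L ^ 2 - 0 ^ 2) / 2 := integral_id_Ioo' (by linarith)
  have wB : ∫ y in Ioo (3 * L) (4 * L), y = ((4 * L) ^ 2 - (3 * L) ^ 2) / 2 :=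
    integral_id_Ioo' (by linarith)
  have wC : ∫ y in Ioo (4 * L) (5 * L), y = ((5 * L) ^ 2 - (4 * L) ^ 2) / 2 :=
    integral_id_Ioo' (by linarith)
  have wAC : ∫ y in Ioo (0:ℝ) L ∪ Ioo (4 * L) (5 * L), y
      = (L ^ 2 - 0 ^ 2) / 2 + ((5 * L) ^ 2 - (4 * L) ^ 2) / 2 := by
    rw [setIntegral_union hdSAC measurableSet_Ioo vintA vintC, wA, wC]
  have wBC : ∫ y in Ioo (3 * L) (4 * L) ∪ Ioo (4 * L) (5 * L), y
      = ((4 * L) ^ 2 - (3 * L) ^ 2) / 2 + ((5 * L) ^ 2 - (4 * L) ^ 2) / 2 := by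
    rw [setIntegral_union hdSBC measurableSet_Ioo vintB vintC, wB, wC]
  have wABC : ∫ y in Ioo (0:ℝ) L ∪ Ioo (3 * L) (4 * L) ∪ Ioo (4 * L) (5 * L), y
      = (L ^ 2 - 0 ^ 2) / 2 + ((4 * L) ^ 2 - (3 * L) ^ 2) / 2
        + ((5 * L) ^ 2 - (4 * L) ^ 2) / 2 := by
    rw [setIntegral_union hdSABC measurableSet_Ioo (vintA.union vintB) vintC,
      setIntegral_union hdSAB measurableSet_Ioo vintA vintB, wA, wB, wC]
  -- the constant a = 2^(1/2) and E = 2^(17/6)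
  set a := Real.exp (L / 2) with hadef
  set E := Real.exp (17 * L / 6) with hEdef
  have ha0 : 0 < a := Real.exp_pos _
  have hE0 : 0 < E := Real.exp_pos _
  have ha2 : a ^ 2 = 2 := by
    rw [hadef, ← Real.exp_nat_mul, show ((2:ℕ):ℝ) * (L / 2) = L by push_cast; ring,
      hLdef, Real.exp_log (by norm_num)]
  have hE6 : E ^ 6 = 131072 := by
    rw [hEdef, ← Real.exp_nat_mul, show ((6:ℕ):ℝ) * (17 * L / 6) = ((17:ℕ):ℝ) * L by
      push_cast; ring, Real.exp_nat_mul, hLdef, Real.exp_log (by norm_num)]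
    norm_num
  -- extract the six equations from hmean
  have eqA : IA = a * mA := by
    have h := hmean A subA bddA measA hμA (by rw [imgA]; exact vposIoo _ _ hL0)
    rw [meanByMeasure, imgA, wA, vtA, ← hmAdef, ← hIAdef,
      show (L ^ 2 - 0 ^ 2) / 2 / L = L / 2 by field_simp; ring, ← hadef] at h
    exact (div_eq_iff hmA0.ne').1 h
  have eqB : IB = a ^ 7 * mB := by
    have h := hmean B subB bddB measB hμB (by rw [imgB]; exact vposIoo _ _ (by linarith))
    rw [meanByMeasure, imgB, wB, vtB, ← hmBdef, ← hIBdef,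
      show ((4 * L) ^ 2 - (3 * L) ^ 2) / 2 / L = ((7:ℕ):ℝ) * (L / 2) by
        push_cast; field_simp; ring,
      Real.exp_nat_mul, ← hadef] at h
    exact (div_eq_iff hmB0.ne').1 h
  have eqC : IC = a ^ 9 * mC := by
    have h := hmean C subC bddC measC hμC (by rw [imgC]; exact vposIoo _ _ (by linarith))
    rw [meanByMeasure, imgC, wC, vtC, ← hmCdef, ← hICdef,
      show ((5 * L) ^ 2 - (4 * L) ^ 2) / 2 / L = ((9:ℕ):ℝ) * (L / 2) by
        push_cast; field_simp; ring,
      Real.exp_nat_mul, ← hadef] at h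
    exact (div_eq_iff hmC0.ne').1 h
  have eqAC : IA + IC = a ^ 5 * (mA + mC) := by
    have hv : 0 < volume (Real.log '' (A ∪ C)) := by
      rw [imgAC]
      exact lt_of_lt_of_le (vposIoo _ _ hL0) (measure_mono Set.subset_union_left)
    have h := hmean (A ∪ C) (Set.union_subset subA subC) (bddA.union bddC) (measA.union measC)
      (lt_of_lt_of_le hμA (measure_mono Set.subset_union_left)) hv
    rw [meanByMeasure, imgAC, wAC, vtAC, tAC, iAC,
      show ((L ^ 2 - 0 ^ 2) / 2 + ((5 * L) ^ 2 - (4 * L) ^ 2) / 2) / (2 * L)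
          = ((5:ℕ):ℝ) * (L / 2) by push_cast; field_simp; ring,
      Real.exp_nat_mul, ← hadef] at h
    exact (div_eq_iff (by positivity)).1 h
  have eqBC : IB + IC = a ^ 8 * (mB + mC) := by
    have hv : 0 < volume (Real.log '' (B ∪ C)) := by
      rw [imgBC]
      exact lt_of_lt_of_le (vposIoo (3 * L) (4 * L) (by linarith))
        (measure_mono Set.subset_union_left)
    have h := hmean (B ∪ C) (Set.union_subset subB subC) (bddB.union bddC) (measB.union measC)
      (lt_of_lt_of_le hμB (measure_mono Set.subset_union_left)) hv
    rw [meanByMeasure, imgBC, wBC, vtBC, tBC, iBC,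
      show (((4 * L) ^ 2 - (3 * L) ^ 2) / 2 + ((5 * L) ^ 2 - (4 * L) ^ 2) / 2) / (2 * L)
          = ((8:ℕ):ℝ) * (L / 2) by push_cast; field_simp; ring,
      Real.exp_nat_mul, ← hadef] at h
    exact (div_eq_iff (by positivity)).1 h
  have eqABC : IA + IB + IC = E * (mA + mB + mC) := by
    have hv : 0 < volume (Real.log '' (A ∪ B ∪ C)) := by
      rw [imgABC]
      exact lt_of_lt_of_le (vposIoo 0 L hL0)
        (measure_mono (Set.subset_union_left.trans Set.subset_union_left))
    have h := hmean (A ∪ B ∪ C) (Set.union_subset (Set.union_subset subA subB) subC)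
      ((bddA.union bddB).union bddC) ((measA.union measB).union measC)
      (lt_of_lt_of_le hμC (measure_mono Set.subset_union_right)) hv
    rw [meanByMeasure, imgABC, wABC, vtABC, tABC, iABC,
      show ((L ^ 2 - 0 ^ 2) / 2 + ((4 * L) ^ 2 - (3 * L) ^ 2) / 2
          + ((5 * L) ^ 2 - (4 * L) ^ 2) / 2) / (3 * L) = 17 * L / 6 by field_simp; ring,
      ← hEdef] at h
    exact (div_eq_iff (by positivity)).1 h
  -- powers of a
  have ha5 : a ^ 5 = 4 * a := by
    rw [show a ^ 5 = (a ^ 2) ^ 2 * a by ring, ha2]; norm_num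
  have ha7 : a ^ 7 = 8 * a := by
    rw [show a ^ 7 = (a ^ 2) ^ 3 * a by ring, ha2]; norm_num
  have ha8 : a ^ 8 = 16 := by
    rw [show a ^ 8 = (a ^ 2) ^ 4 by ring, ha2]; norm_num
  have ha9 : a ^ 9 = 16 * a := by
    rw [show a ^ 9 = (a ^ 2) ^ 4 * a by ring, ha2]; norm_num
  -- solve: mA = 4 mC, mB = a mC
  have hmA4 : mA = 4 * mC := by
    have h1 : a * (mA + 16 * mC) = a * (4 * (mA + mC)) := by
      rw [eqA, eqC, ha9, ha5] at eqAC; linarith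
    have := mul_left_cancel₀ ha0.ne' h1
    linarith
  have haux : (8 * a - 16) * (mB - a * mC) = 0 := by
    have h2 : 8 * a * mB + 16 * a * mC = 16 * (mB + mC) := by
      rw [eqB, eqC, ha7, ha9, ha8] at eqBC; linarith
    linear_combination h2 - 8 * mC * ha2
  have ha_lt2 : a < 2 := sq_eq_two_lt_two ha0 ha2
  have hmBa : mB = a * mC := by
    rcases mul_eq_zero.1 haux with h | h
    · exfalso; linarith
    · linarith
  -- final contradiction
  have hfinal : 20 * a + 16 = E * (5 + a) := by
    have h3 : (20 * a + 16) * mC = (E * (5 + a)) * mC := by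
      rw [eqA, eqB, eqC, ha7, ha9, hmA4, hmBa] at eqABC
      linear_combination eqABC - 8 * mC * ha2
    exact mul_right_cancel₀ hmC0.ne' h3
  exact final_contra ha0 ha2 hE0 hE6 hfinal
end

section
/- Let H ⊆ (0,∞) be a bounded Borel set with λ(H) > 0 and ∫_H x^{-3/2} dλ(x) < ∞. Then (∫_H x^{-1/2} dλ(x)) / (∫_H x^{-3/2} dλ(x)) ≤ (∫_H x dλ(x)) / λ(H). That is, M^{μ_G}(H) ≤ Avg(H): the generalized geometric mean of H (given by the measure μ_G generating the ordinary geometric mean) is at most the generalized arithmetic mean of H. -/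
open MeasureTheory Set
open scoped ENNReal

/-- Hölder step specialized to powers of `ENNReal.ofReal x`. -/
lemma holder_rpow_step (μ : MeasureTheory.Measure ℝ) {p q : ℝ} (a b : ℝ)
    (hpq : p.HolderConjugate q) :
    ∫⁻ x, (ENNReal.ofReal x) ^ a * (ENNReal.ofReal x) ^ b ∂μ ≤
      (∫⁻ x, (ENNReal.ofReal x) ^ (a * p) ∂μ) ^ (1 / p) *
        (∫⁻ x, (ENNReal.ofReal x) ^ (b * q) ∂μ) ^ (1 / q) := by
  have hf : AEMeasurable (fun x : ℝ => (ENNReal.ofReal x) ^ a) μ :=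
    (measurable_id.ennreal_ofReal.pow_const a).aemeasurable
  have hg : AEMeasurable (fun x : ℝ => (ENNReal.ofReal x) ^ b) μ :=
    (measurable_id.ennreal_ofReal.pow_const b).aemeasurable
  have := ENNReal.lintegral_mul_le_Lp_mul_Lq μ hpq hf hg
  simpa only [Pi.mul_apply, ← ENNReal.rpow_mul] using this

theorem generalized_AM_GM (H : Set ℝ)
    (hH : H ⊆ Ioi 0) (hHb : Bornology.IsBounded H) (hHm : MeasurableSet H)
    (hpos : 0 < volume H)
    (hint : IntegrableOn (fun x : ℝ => x ^ (-(3 : ℝ) / 2)) H volume) :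
    (∫ x in H, x ^ (-(1 : ℝ) / 2)) / (∫ x in H, x ^ (-(3 : ℝ) / 2)) ≤
      (∫ x in H, x) / (volume H).toReal := by
  set μ := volume.restrict H with hμ
  have haeH : ∀ᵐ x ∂μ, x ∈ H := ae_restrict_mem hHm
  have haepos : ∀ᵐ x ∂μ, 0 < x := haeH.mono fun x hx => hH hx
  -- bound on H
  obtain ⟨M, hM⟩ := isBounded_iff_forall_norm_le.1 hHb
  obtain ⟨x₀, hx₀⟩ : H.Nonempty := nonempty_of_measure_ne_zero hpos.ne'
  have hx₀pos : 0 < x₀ := hH hx₀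
  have hMpos : 0 < M := lt_of_lt_of_le hx₀pos (by simpa [abs_of_pos hx₀pos] using hM x₀ hx₀)
  have hle : ∀ x ∈ H, x ≤ M := fun x hx => le_trans (le_abs_self x) (hM x hx)
  -- finiteness of volume H
  have hvol_lt : volume H < ⊤ := hHb.measure_lt_top
  -- the lintegrals
  set I : ℝ → ℝ≥0∞ := fun r => ∫⁻ x, (ENNReal.ofReal x) ^ r ∂μ with hI
  -- I 1 finite
  have hI1_lt : I 1 < ⊤ := by
    have : I 1 ≤ ∫⁻ _, ENNReal.ofReal M ∂μ := by
      refine lintegral_mono_ae (haeH.mono fun x hx => ?_)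
      simp only [ENNReal.rpow_one]
      exact ENNReal.ofReal_le_ofReal (hle x hx)
    refine lt_of_le_of_lt this ?_
    simp only [lintegral_const, hμ, Measure.restrict_apply MeasurableSet.univ, univ_inter]
    exact ENNReal.mul_lt_top ENNReal.ofReal_lt_top hvol_lt
  -- I (-3/2) = ofReal lintegral of x ^ (-3/2)
  have hofReal : ∀ r : ℝ, ∀ᵐ x ∂μ, ENNReal.ofReal (x ^ r) = (ENNReal.ofReal x) ^ r := by
    intro r
    exact haepos.mono fun x hx => (ENNReal.ofReal_rpow_of_pos hx).symm
  have hInt_eq : ∀ r : ℝ, (∫ x in H, x ^ r) = (I r).toReal := by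
    intro r
    have hnn : 0 ≤ᵐ[μ] fun x => x ^ r :=
      haepos.mono fun x hx => Real.rpow_nonneg hx.le r
    have hm : AEStronglyMeasurable (fun x : ℝ => x ^ r) μ := by fun_prop
    rw [show (∫ x in H, x ^ r) = ∫ x, x ^ r ∂μ from rfl,
      integral_eq_lintegral_of_nonneg_ae hnn hm]
    congr 1
    exact lintegral_congr_ae (hofReal r)
  -- I (-3/2) finite
  have hI32_lt : I (-(3:ℝ)/2) < ⊤ := by
    have h2 := hint.2
    rw [hasFiniteIntegral_iff_norm] at h2
    refine lt_of_le_of_lt (le_of_eq (lintegral_congr_ae ?_)) h2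
    refine haepos.mono fun x hx => ?_
    show ENNReal.ofReal x ^ (-(3:ℝ)/2) = ENNReal.ofReal ‖x ^ (-(3:ℝ)/2)‖
    rw [Real.norm_eq_abs, abs_of_nonneg (Real.rpow_nonneg hx.le _)]
    exact ENNReal.ofReal_rpow_of_pos hx
  -- I (-3/2) positive
  have hI32_pos : 0 < I (-(3:ℝ)/2) := by
    have hlow : ∀ᵐ x ∂μ, ENNReal.ofReal (M ^ (-(3:ℝ)/2)) ≤ (ENNReal.ofReal x) ^ (-(3:ℝ)/2) := by
      refine haeH.mono fun x hx => ?_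
      rw [ENNReal.ofReal_rpow_of_pos (hH hx)]
      exact ENNReal.ofReal_le_ofReal
        (Real.rpow_le_rpow_of_nonpos (hH hx) (hle x hx) (by norm_num))
    calc (0:ℝ≥0∞) < ENNReal.ofReal (M ^ (-(3:ℝ)/2)) * volume H := by
          refine ENNReal.mul_pos ?_ hpos.ne'
          simp [ENNReal.ofReal_pos]
          positivity
      _ = ∫⁻ _, ENNReal.ofReal (M ^ (-(3:ℝ)/2)) ∂μ := by
          simp [hμ, Measure.restrict_apply MeasurableSet.univ, univ_inter]
      _ ≤ I (-(3:ℝ)/2) := lintegral_mono_ae hlow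
  -- Hölder inequality applications
  have hpq1 : (5/2 : ℝ).HolderConjugate (5/3) := ⟨by norm_num, by norm_num, by norm_num⟩
  have hpq2 : (5/3 : ℝ).HolderConjugate (5/2) := ⟨by norm_num, by norm_num, by norm_num⟩
  have hA : I (-(1:ℝ)/2) ≤ I 1 ^ (2/5 : ℝ) * I (-(3:ℝ)/2) ^ (3/5 : ℝ) := by
    have key := holder_rpow_step μ (2/5) (-9/10) hpq1
    rw [show (2/5 : ℝ) * (5/2) = 1 by norm_num,
      show (-9/10 : ℝ) * (5/3) = -(3:ℝ)/2 by norm_num,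
      show (1:ℝ) / (5/2) = 2/5 by norm_num,
      show (1:ℝ) / (5/3) = 3/5 by norm_num] at key
    refine le_trans (le_of_eq (lintegral_congr_ae ?_)) key
    refine haepos.mono fun x hx => ?_
    show ENNReal.ofReal x ^ (-(1:ℝ)/2)
        = ENNReal.ofReal x ^ (2/5 : ℝ) * ENNReal.ofReal x ^ (-9/10 : ℝ)
    rw [← ENNReal.rpow_add _ _ (ENNReal.ofReal_pos.mpr hx).ne' ENNReal.ofReal_ne_top]
    congr 1
    norm_num
  have hB : volume H ≤ I 1 ^ (3/5 : ℝ) * I (-(3:ℝ)/2) ^ (2/5 : ℝ) := by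
    have key := holder_rpow_step μ (3/5) (-3/5) hpq2
    rw [show (3/5 : ℝ) * (5/3) = 1 by norm_num,
      show (-3/5 : ℝ) * (5/2) = -(3:ℝ)/2 by norm_num,
      show (1:ℝ) / (5/3) = 3/5 by norm_num,
      show (1:ℝ) / (5/2) = 2/5 by norm_num] at key
    refine le_trans (le_of_eq ?_) key
    rw [show volume H = ∫⁻ _, 1 ∂μ by
      simp [hμ, Measure.restrict_apply MeasurableSet.univ, univ_inter]]
    refine lintegral_congr_ae (haepos.mono fun x hx => ?_)
    show (1:ℝ≥0∞) = ENNReal.ofReal x ^ (3/5 : ℝ) * ENNReal.ofReal x ^ (-3/5 : ℝ)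
    rw [← ENNReal.rpow_add _ _ (ENNReal.ofReal_pos.mpr hx).ne' ENNReal.ofReal_ne_top,
      show (3/5 : ℝ) + -3/5 = 0 by norm_num, ENNReal.rpow_zero]
  -- combine
  have hmain : volume H * I (-(1:ℝ)/2) ≤ I 1 * I (-(3:ℝ)/2) := by
    calc volume H * I (-(1:ℝ)/2)
        ≤ (I 1 ^ (3/5 : ℝ) * I (-(3:ℝ)/2) ^ (2/5 : ℝ)) *
          (I 1 ^ (2/5 : ℝ) * I (-(3:ℝ)/2) ^ (3/5 : ℝ)) := mul_le_mul' hB hA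
      _ = (I 1 ^ (3/5 : ℝ) * I 1 ^ (2/5 : ℝ)) *
          (I (-(3:ℝ)/2) ^ (2/5 : ℝ) * I (-(3:ℝ)/2) ^ (3/5 : ℝ)) := by ring
      _ = I 1 * I (-(3:ℝ)/2) := by
          rw [← ENNReal.rpow_add_of_nonneg _ _ (by norm_num) (by norm_num),
            ← ENNReal.rpow_add_of_nonneg _ _ (by norm_num) (by norm_num)]
          norm_num
  -- I(-1/2) finite
  have hI12_lt : I (-(1:ℝ)/2) < ⊤ :=
    lt_of_le_of_lt hA (ENNReal.mul_lt_top
      (ENNReal.rpow_lt_top_of_nonneg (by norm_num) hI1_lt.ne)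
      (ENNReal.rpow_lt_top_of_nonneg (by norm_num) hI32_lt.ne))
  -- convert to reals
  have hC_pos : (0:ℝ) < (I (-(3:ℝ)/2)).toReal :=
    ENNReal.toReal_pos hI32_pos.ne' hI32_lt.ne
  have hV_pos : (0:ℝ) < (volume H).toReal := ENNReal.toReal_pos hpos.ne' hvol_lt.ne
  rw [hInt_eq (-(1:ℝ)/2), hInt_eq (-(3:ℝ)/2)]
  rw [div_le_div_iff₀ hC_pos hV_pos]
  have hA1 : (∫ x in H, x) = (I 1).toReal := by
    have := hInt_eq 1
    simpa [Real.rpow_one] using this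
  rw [hA1]
  calc (I (-(1:ℝ)/2)).toReal * (volume H).toReal
      = (volume H * I (-(1:ℝ)/2)).toReal := by
        rw [ENNReal.toReal_mul]; ring
    _ ≤ (I 1 * I (-(3:ℝ)/2)).toReal := by
        refine ENNReal.toReal_mono ?_ hmain
        exact (ENNReal.mul_lt_top hI1_lt hI32_lt).ne
    _ = (I 1).toReal * (I (-(3:ℝ)/2)).toReal := ENNReal.toReal_mul
end

section
/- Let n ∈ ℕ, n ≥ 1, and let a_1 < b_1 ≤ a_2 < b_2 ≤ ⋯ ≤ a_n < b_n be positive real numbers (so the open intervals (a_i, b_i) are pairwise disjoint and ordered). Then (Σ_{i=1}^n (√(b_i) − √(a_i))) / (Σ_{i=1}^n (1/√(a_i) − 1/√(b_i))) ≤ (1/2) · (Σ_{i=1}^n (b_i² − a_i²)) / (Σ_{i=1}^n (b_i − a_i)). -/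
open Finset

/-- Auxiliary inequality in symmetric-function variables, assuming `e1 ≤ e2`. -/
lemma gm_am_aux_em_le (e1 m1 e2 m2 : ℝ) (he1 : 0 < e1) (he2 : 0 < e2)
    (hm1 : 0 < m1) (hm2 : 0 < m2)
    (h1 : 4 * m1 ≤ e1 ^ 2) (h2 : 4 * m2 ≤ e2 ^ 2) (hle : e1 ≤ e2) :
    0 ≤ m1 * e1 * (e1 ^ 2 - 2 * m1 - 2 * m2) + m2 * e2 * (e2 ^ 2 - 2 * m1 - 2 * m2) := by
  rcases le_or_gt (2 * m1 + 2 * m2) (e1 ^ 2) with h | h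
  · have hsq : e1 ^ 2 ≤ e2 ^ 2 := by nlinarith
    have t1 : 0 ≤ m1 * e1 * (e1 ^ 2 - 2 * m1 - 2 * m2) :=
      mul_nonneg (mul_nonneg hm1.le he1.le) (by linarith)
    have t2 : 0 ≤ m2 * e2 * (e2 ^ 2 - 2 * m1 - 2 * m2) :=
      mul_nonneg (mul_nonneg hm2.le he2.le) (by linarith)
    linarith
  · have hsq : e1 ^ 2 < e2 ^ 2 := by linarith
    have hX : 0 ≤ e2 ^ 2 - (2 * m1 + 2 * m2) := by linarith
    have H1 : 0 ≤ e1 * (e1 ^ 2 - 4 * m1) * ((2 * m1 + 2 * m2) - e1 ^ 2) :=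
      mul_nonneg (mul_nonneg he1.le (by linarith)) (by linarith)
    have H2 : 0 ≤ (e1 ^ 2 - 4 * m1) * (e2 * (e2 ^ 2 - (2 * m1 + 2 * m2))) :=
      mul_nonneg (by linarith) (mul_nonneg he2.le hX)
    have Ha : 0 ≤ e2 * (e2 ^ 2 - (2 * (2 * m1 + 2 * m2) - e1 ^ 2)) :=
      mul_nonneg he2.le (by linarith)
    have Hb : 0 ≤ (e2 - e1) * ((2 * m1 + 2 * m2) - e1 ^ 2) :=
      mul_nonneg (by linarith) (by linarith)
    have hstep2 : e1 * ((2 * m1 + 2 * m2) - e1 ^ 2) ≤ e2 * (e2 ^ 2 - (2 * m1 + 2 * m2)) := by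
      nlinarith [Ha, Hb]
    have H3 : 0 ≤ (2 * (2 * m1 + 2 * m2) - e1 ^ 2) *
        (e2 * (e2 ^ 2 - (2 * m1 + 2 * m2)) - e1 * ((2 * m1 + 2 * m2) - e1 ^ 2)) :=
      mul_nonneg (by linarith) (by linarith)
    have H4 : 0 ≤ e1 * ((2 * m1 + 2 * m2) - e1 ^ 2) ^ 2 :=
      mul_nonneg he1.le (sq_nonneg _)
    nlinarith [H1, H2, H3, H4]

lemma gm_am_aux_em (e1 m1 e2 m2 : ℝ) (he1 : 0 < e1) (he2 : 0 < e2)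
    (hm1 : 0 < m1) (hm2 : 0 < m2)
    (h1 : 4 * m1 ≤ e1 ^ 2) (h2 : 4 * m2 ≤ e2 ^ 2) :
    0 ≤ m1 * e1 * (e1 ^ 2 - 2 * m1 - 2 * m2) + m2 * e2 * (e2 ^ 2 - 2 * m1 - 2 * m2) := by
  rcases le_total e1 e2 with hle | hle
  · exact gm_am_aux_em_le e1 m1 e2 m2 he1 he2 hm1 hm2 h1 h2 hle
  · have := gm_am_aux_em_le e2 m2 e1 m1 he2 he1 hm2 hm1 h2 h1 hle
    linarith

/-- The key polynomial inequality. -/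
lemma gm_am_poly (p q r s : ℝ) (hp : 0 < p) (hq : 0 < q) (hr : 0 < r) (hs : 0 < s) :
    2 * p * q * r * s * (p + q + r + s) ≤
      p * q * (p + q) * (p ^ 2 + q ^ 2) + r * s * (r + s) * (r ^ 2 + s ^ 2) := by
  have h := gm_am_aux_em (p + q) (p * q) (r + s) (r * s) (by linarith) (by linarith)
    (mul_pos hp hq) (mul_pos hr hs) (by nlinarith [sq_nonneg (p - q)])
    (by nlinarith [sq_nonneg (r - s)])
  nlinarith [h]

/-- Pairwise key inequality with square roots. -/
lemma gm_am_key (x y z w : ℝ) (hx : 0 < x) (hxy : x < y) (hz : 0 < z) (hzw : z < w) :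
    (Real.sqrt y - Real.sqrt x) * (w - z) + (Real.sqrt w - Real.sqrt z) * (y - x) ≤
      (y ^ 2 - x ^ 2) / 2 * (1 / Real.sqrt z - 1 / Real.sqrt w) +
        (w ^ 2 - z ^ 2) / 2 * (1 / Real.sqrt x - 1 / Real.sqrt y) := by
  set p := Real.sqrt x with hp'
  set q := Real.sqrt y with hq'
  set r := Real.sqrt z with hr'
  set s := Real.sqrt w with hs'
  have hy : 0 < y := hx.trans hxy
  have hw : 0 < w := hz.trans hzw
  have hp : 0 < p := Real.sqrt_pos.2 hx
  have hq : 0 < q := Real.sqrt_pos.2 hy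
  have hr : 0 < r := Real.sqrt_pos.2 hz
  have hs : 0 < s := Real.sqrt_pos.2 hw
  have hpq : p < q := Real.sqrt_lt_sqrt hx.le hxy
  have hrs : r < s := Real.sqrt_lt_sqrt hz.le hzw
  have hx2 : x = p ^ 2 := (Real.sq_sqrt hx.le).symm
  have hy2 : y = q ^ 2 := (Real.sq_sqrt hy.le).symm
  have hz2 : z = r ^ 2 := (Real.sq_sqrt hz.le).symm
  have hw2 : w = s ^ 2 := (Real.sq_sqrt hw.le).symm
  rw [hx2, hy2, hz2, hw2, ← sub_nonneg]
  have hQ := gm_am_poly p q r s hp hq hr hs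
  have key : ((q ^ 2) ^ 2 - (p ^ 2) ^ 2) / 2 * (1 / r - 1 / s) +
      ((s ^ 2) ^ 2 - (r ^ 2) ^ 2) / 2 * (1 / p - 1 / q) -
      ((q - p) * (s ^ 2 - r ^ 2) + (s - r) * (q ^ 2 - p ^ 2)) =
      ((q - p) * (s - r) *
        (p * q * (p + q) * (p ^ 2 + q ^ 2) + r * s * (r + s) * (r ^ 2 + s ^ 2) -
          2 * p * q * r * s * (p + q + r + s))) / (2 * (p * q * r * s)) := by
    field_simp
    ring
  rw [key]
  apply div_nonneg
  · apply mul_nonneg (mul_nonneg (by linarith) (by linarith))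
    linarith
  · positivity

theorem gm_am_inequality_finite_union_of_intervals (n : ℕ) (hn : 1 ≤ n)
    (a b : ℕ → ℝ)
    (hpos : ∀ i < n, 0 < a i)
    (hab : ∀ i < n, a i < b i)
    (hord : ∀ i, i + 1 < n → b i ≤ a (i + 1)) :
    (∑ i ∈ range n, (Real.sqrt (b i) - Real.sqrt (a i))) /
        (∑ i ∈ range n, (1 / Real.sqrt (a i) - 1 / Real.sqrt (b i))) ≤
      (1 / 2) * (∑ i ∈ range n, (b i ^ 2 - a i ^ 2)) /
        (∑ i ∈ range n, (b i - a i)) := by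
  have hne : (range n).Nonempty := nonempty_range_iff.2 (by omega)
  have hbpos : ∀ i < n, 0 < b i := fun i hi => (hpos i hi).trans (hab i hi)
  have hBpos : ∀ i ∈ range n, 0 < 1 / Real.sqrt (a i) - 1 / Real.sqrt (b i) := by
    intro i hi
    rw [mem_range] at hi
    have h1 : 0 < Real.sqrt (a i) := Real.sqrt_pos.2 (hpos i hi)
    have h2 : Real.sqrt (a i) < Real.sqrt (b i) := Real.sqrt_lt_sqrt (hpos i hi).le (hab i hi)
    have := one_div_lt_one_div_of_lt h1 h2
    linarith
  have hDpos : ∀ i ∈ range n, 0 < b i - a i := by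
    intro i hi; rw [mem_range] at hi; have := hab i hi; linarith
  have hS2 : 0 < ∑ i ∈ range n, (1 / Real.sqrt (a i) - 1 / Real.sqrt (b i)) :=
    sum_pos hBpos hne
  have hS4 : 0 < ∑ i ∈ range n, (b i - a i) := sum_pos hDpos hne
  rw [div_le_div_iff₀ hS2 hS4]
  -- Chebyshev-style double sum argument
  have hkey : ∀ i ∈ range n, ∀ j ∈ range n,
      (Real.sqrt (b i) - Real.sqrt (a i)) * (b j - a j) +
        (Real.sqrt (b j) - Real.sqrt (a j)) * (b i - a i) ≤
      (b i ^ 2 - a i ^ 2) / 2 * (1 / Real.sqrt (a j) - 1 / Real.sqrt (b j)) +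
        (b j ^ 2 - a j ^ 2) / 2 * (1 / Real.sqrt (a i) - 1 / Real.sqrt (b i)) := by
    intro i hi j hj
    rw [mem_range] at hi hj
    exact gm_am_key (a i) (b i) (a j) (b j) (hpos i hi) (hab i hi) (hpos j hj) (hab j hj)
  have hsum : ∑ i ∈ range n, ∑ j ∈ range n,
      ((Real.sqrt (b i) - Real.sqrt (a i)) * (b j - a j) +
        (Real.sqrt (b j) - Real.sqrt (a j)) * (b i - a i)) ≤
      ∑ i ∈ range n, ∑ j ∈ range n,
      ((b i ^ 2 - a i ^ 2) / 2 * (1 / Real.sqrt (a j) - 1 / Real.sqrt (b j)) +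
        (b j ^ 2 - a j ^ 2) / 2 * (1 / Real.sqrt (a i) - 1 / Real.sqrt (b i))) :=
    sum_le_sum fun i hi => sum_le_sum fun j hj => hkey i hi j hj
  have expand : ∀ f g : ℕ → ℝ,
      ∑ i ∈ range n, ∑ j ∈ range n, (f i * g j + f j * g i) =
        2 * ((∑ i ∈ range n, f i) * (∑ j ∈ range n, g j)) := by
    intro f g
    simp only [sum_add_distrib]
    rw [← Finset.sum_mul_sum (range n) (range n) f g, Finset.sum_comm,
      ← Finset.sum_mul_sum (range n) (range n) f g]
    ring
  have e1 := expand (fun i => Real.sqrt (b i) - Real.sqrt (a i)) (fun i => b i - a i)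
  have e2 := expand (fun i => (b i ^ 2 - a i ^ 2) / 2)
    (fun i => 1 / Real.sqrt (a i) - 1 / Real.sqrt (b i))
  rw [e1, e2] at hsum
  have e3 : ∑ i ∈ range n, (b i ^ 2 - a i ^ 2) / 2 =
      (∑ i ∈ range n, (b i ^ 2 - a i ^ 2)) / 2 := by
    rw [sum_div]
  rw [e3] at hsum
  nlinarith [hsum]
end

section
/- Let μ be a Borel measure on ℝ supported on (0,∞) with μ(B) < ∞ for every bounded Borel set B. For a bounded interval I ⊆ (0,∞) define m_I = inf{ μ(H)/λ(H) : H ⊆ I Borel, λ(H) > 0, μ(H) > 0 } and M_I = sup of the same set. Assume that 0 < m_I ≤ M_I < ∞ for every bounded nondegenerate interval I ⊆ (0,∞), and that lim_{x→+∞} M_{I+x}/m_{I+x} = 1 for every such I. Then for every bounded Borel set H ⊆ (0,∞) with λ(H) > 0 and 0 < μ(H) < ∞ one has lim_{x→+∞} |M^μ(H+x) − Avg(H+x)| = 0, where H + x = {h + x : h ∈ H}. -/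
open MeasureTheory Set Filter Topology

noncomputable def avg (H : Set ℝ) : ℝ :=
  (∫ x in H, x) / (volume H).toReal

/-- The set of density ratios `μ(H)/λ(H)` over subsets `H ⊆ I` in the domain of the mean. -/
def ratioSet (μ : Measure ℝ) (I : Set ℝ) : Set ℝ :=
  {r | ∃ H : Set ℝ, H ⊆ I ∧ MeasurableSet H ∧ 0 < volume H ∧ 0 < μ H ∧
        r = (μ H).toReal / (volume H).toReal}

lemma ratioSet_nonneg (μ : Measure ℝ) (I : Set ℝ) {r : ℝ} (hr : r ∈ ratioSet μ I) : 0 ≤ r := by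
  obtain ⟨H, -, -, -, -, rfl⟩ := hr
  positivity

lemma bddBelow_ratioSet (μ : Measure ℝ) (I : Set ℝ) : BddBelow (ratioSet μ I) :=
  ⟨0, fun _ hr => ratioSet_nonneg μ I hr⟩

lemma mem_ratioSet {μ : Measure ℝ} {I K : Set ℝ} (hKI : K ⊆ I) (hK : MeasurableSet K)
    (hv : 0 < volume K) (hμ : 0 < μ K) :
    (μ K).toReal / (volume K).toReal ∈ ratioSet μ I :=
  ⟨K, hKI, hK, hv, hμ, rfl⟩

lemma ratioSet_nonempty {μ : Measure ℝ} {I : Set ℝ} (hm : 0 < sInf (ratioSet μ I)) :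
    (ratioSet μ I).Nonempty := by
  by_contra h
  rw [not_nonempty_iff_eq_empty] at h
  rw [h, Real.sInf_empty] at hm
  exact lt_irrefl 0 hm

/-- algebra for the final bound -/
lemma algebra_bound {m M a b u v L : ℝ} (hm : 0 < m) (hmM : m ≤ M)
    (h1 : m * b ≤ a) (h2 : a ≤ M * b) (h3 : m * v ≤ u) (h4 : u ≤ M * v)
    (hv : 0 < v) (hb : 0 ≤ b) (hbL : b ≤ L * v) :
    |a / u - b / v| ≤ (M / m - 1) * L := by
  have hM : 0 < M := lt_of_lt_of_le hm hmM
  have hu : 0 < u := lt_of_lt_of_le (by positivity) h3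
  have hbv : b / v ≤ L := (div_le_iff₀ hv).2 hbL
  have hbv0 : 0 ≤ b / v := by positivity
  have hr1 : (1 : ℝ) ≤ M / m := (one_le_div hm).2 hmM
  have key1 : a / u - b / v ≤ (M / m - 1) * (b / v) := by
    have : a / u ≤ (M * b) / (m * v) := by
      calc a / u ≤ (M * b) / u := by gcongr
        _ ≤ (M * b) / (m * v) := by gcongr
    have heq : (M * b) / (m * v) = (M / m) * (b / v) := by
      field_simp
    nlinarith [this, heq]
  have key2 : b / v - a / u ≤ (M / m - 1) * (b / v) := by
    have h5 : (m * b) / (M * v) ≤ a / u := by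
      calc (m * b) / (M * v) ≤ (m * b) / u := by gcongr
        _ ≤ a / u := by gcongr
    have heq : (m * b) / (M * v) = (m / M) * (b / v) := by
      field_simp
    have hineq : 1 - m / M ≤ M / m - 1 := by
      have hd : M / m - 1 - (1 - m / M) = (M - m)^2 / (m * M) := by
        field_simp
      nlinarith [hd, div_nonneg (sq_nonneg (M - m)) (le_of_lt (mul_pos hm hM))]
    nlinarith [h5, heq, mul_le_mul_of_nonneg_right hineq hbv0]
  have hL : 0 ≤ L := le_trans hbv0 hbv
  rw [abs_sub_le_iff]
  constructor
  · exact key1.trans (by nlinarith)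
  · exact key2.trans (by nlinarith)

lemma volK_fin {K : Set ℝ} {c d : ℝ} (hKJ : K ⊆ Ioc c d) : volume K < ⊤ :=
  lt_of_le_of_lt (measure_mono hKJ) (by rw [Real.volume_Ioc]; exact ENNReal.ofReal_lt_top)

lemma sandwich_upper (μ : Measure ℝ) {c d : ℝ} (hcd : c < d)
    (hfinJ : μ (Ioc c d) < ⊤) (hM : BddAbove (ratioSet μ (Ioc c d)))
    {K : Set ℝ} (hK : MeasurableSet K) (hKJ : K ⊆ Ioc c d) :
    μ K ≤ ENNReal.ofReal (sSup (ratioSet μ (Ioc c d))) * volume K := by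
  set R := ratioSet μ (Ioc c d) with hR
  set M := sSup R with hMdef
  have hM0 : 0 ≤ M := Real.sSup_nonneg (fun r hr => ratioSet_nonneg μ _ hr)
  rcases eq_or_ne (μ K) 0 with h0 | h0
  · rw [h0]; exact zero_le
  have hμK : 0 < μ K := pos_iff_ne_zero.2 h0
  have hμKfin : μ K < ⊤ := lt_of_le_of_lt (measure_mono hKJ) hfinJ
  have hvfin : volume K < ⊤ := volK_fin hKJ
  rcases eq_or_ne (volume K) 0 with hvol0 | hvol0
  · -- contradiction : K has positive μ-measure but zero volume
    exfalso
    set q := (μ K).toReal with hq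
    have hq0 : 0 < q := ENNReal.toReal_pos h0 hμKfin.ne
    set δ := min (d - c) (q / (2 * (M + 1))) with hδdef
    have hδ0 : 0 < δ := lt_min (by linarith) (by positivity)
    have hδle : δ ≤ q / (2 * (M + 1)) := min_le_right _ _
    set L := K ∪ Ioc c (c + δ) with hL
    have hLJ : L ⊆ Ioc c d := by
      apply union_subset hKJ
      apply Ioc_subset_Ioc_right
      have := min_le_left (d - c) (q / (2 * (M + 1)))
      linarith [hδdef ▸ this]
    have hLmeas : MeasurableSet L := hK.union measurableSet_Ioc
    have hvL : 0 < volume L := by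
      apply lt_of_lt_of_le _ (measure_mono (subset_union_right))
      rw [Real.volume_Ioc]
      simp [ENNReal.ofReal_pos, hδ0]
    have hvLle : volume L ≤ ENNReal.ofReal δ := by
      calc volume L ≤ volume K + volume (Ioc c (c + δ)) := measure_union_le _ _
        _ = ENNReal.ofReal δ := by rw [hvol0, Real.volume_Ioc, zero_add]; ring_nf
    have hμL : 0 < μ L := lt_of_lt_of_le hμK (measure_mono subset_union_left)
    have hμLfin : μ L < ⊤ := lt_of_le_of_lt (measure_mono hLJ) hfinJ
    have hvLfin : volume L < ⊤ := volK_fin hLJ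
    have hmem : (μ L).toReal / (volume L).toReal ∈ R := mem_ratioSet hLJ hLmeas hvL hμL
    have hle : (μ L).toReal / (volume L).toReal ≤ M := le_csSup hM hmem
    have hvL' : 0 < (volume L).toReal := ENNReal.toReal_pos hvL.ne' hvLfin.ne
    have hvLle' : (volume L).toReal ≤ δ :=
      ENNReal.toReal_le_of_le_ofReal hδ0.le hvLle
    have hμL' : q ≤ (μ L).toReal :=
      ENNReal.toReal_mono hμLfin.ne (measure_mono subset_union_left)
    have h1 : q / δ ≤ (μ L).toReal / (volume L).toReal := by
      calc q / δ ≤ (μ L).toReal / δ := by gcongr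
        _ ≤ (μ L).toReal / (volume L).toReal := by gcongr
    have h2 : 2 * (M + 1) ≤ q / δ := by
      rw [le_div_iff₀ hδ0]
      calc 2 * (M + 1) * δ ≤ 2 * (M + 1) * (q / (2 * (M + 1))) := by gcongr
        _ = q := by field_simp
    linarith
  · -- main case
    have hvK : 0 < volume K := pos_iff_ne_zero.2 hvol0
    have hmem : (μ K).toReal / (volume K).toReal ∈ R := mem_ratioSet hKJ hK hvK hμK
    have hle : (μ K).toReal / (volume K).toReal ≤ M := le_csSup hM hmem
    have hvK' : 0 < (volume K).toReal := ENNReal.toReal_pos hvol0 hvfin.ne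
    have h2 : (μ K).toReal ≤ M * (volume K).toReal := (div_le_iff₀ hvK').1 hle
    calc μ K = ENNReal.ofReal (μ K).toReal := (ENNReal.ofReal_toReal hμKfin.ne).symm
      _ ≤ ENNReal.ofReal (M * (volume K).toReal) := ENNReal.ofReal_le_ofReal h2
      _ = ENNReal.ofReal M * ENNReal.ofReal (volume K).toReal := ENNReal.ofReal_mul hM0
      _ = ENNReal.ofReal M * volume K := by rw [ENNReal.ofReal_toReal hvfin.ne]

lemma small_mu_set (μ : Measure ℝ) {c d : ℝ} (hcd : c < d)
    (hfinJ : μ (Ioc c d) < ⊤) (hm : 0 < sInf (ratioSet μ (Ioc c d)))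
    (hM : BddAbove (ratioSet μ (Ioc c d))) {ε : ℝ} (hε : 0 < ε) :
    ∃ S : Set ℝ, S ⊆ Ioc c d ∧ MeasurableSet S ∧ 0 < μ S ∧ (μ S).toReal ≤ ε := by
  set R := ratioSet μ (Ioc c d) with hR
  set M := sSup R with hMdef
  have hM0 : 0 ≤ M := Real.sSup_nonneg (fun r hr => ratioSet_nonneg μ _ hr)
  -- μ (Ioc c d) > 0 since the ratio set is nonempty
  obtain ⟨r, H₀, hH₀J, hH₀meas, hv₀, hμ₀, rfl⟩ := ratioSet_nonempty hm
  have hμJ : 0 < μ (Ioc c d) := lt_of_lt_of_le hμ₀ (measure_mono hH₀J)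
  set f : ℝ → ℝ := fun t => (μ (Ioc c t)).toReal with hf
  have hfc : f c = 0 := by simp [hf]
  have hmono : ∀ s ∈ Icc c d, ∀ t ∈ Icc c d, s ≤ t → f s ≤ f t ∧ f t - f s ≤ M * (t - s) := by
    intro s hs t ht hst
    have hsplit : μ (Ioc c t) = μ (Ioc c s) + μ (Ioc s t) := by
      rw [← measure_union _ measurableSet_Ioc]
      · rw [Ioc_union_Ioc_eq_Ioc hs.1 hst]
      · exact Ioc_disjoint_Ioc_of_le le_rfl
    have hfin1 : μ (Ioc c s) < ⊤ :=
      lt_of_le_of_lt (measure_mono (Ioc_subset_Ioc_right hs.2)) hfinJ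
    have hfin2 : μ (Ioc s t) < ⊤ :=
      lt_of_le_of_lt (measure_mono (Ioc_subset_Ioc hs.1 ht.2)) hfinJ
    have hfint : μ (Ioc c t) < ⊤ :=
      lt_of_le_of_lt (measure_mono (Ioc_subset_Ioc_right ht.2)) hfinJ
    have htr : f t = f s + (μ (Ioc s t)).toReal := by
      rw [hf]; simp only
      rw [hsplit, ENNReal.toReal_add hfin1.ne hfin2.ne]
    have hbound : (μ (Ioc s t)).toReal ≤ M * (t - s) := by
      have := sandwich_upper μ hcd hfinJ hM measurableSet_Ioc (Ioc_subset_Ioc hs.1 ht.2)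
      rw [Real.volume_Ioc, ← ENNReal.ofReal_mul hM0] at this
      exact ENNReal.toReal_le_of_le_ofReal (by nlinarith) this
    constructor
    · rw [htr]; linarith [ENNReal.toReal_nonneg (a := μ (Ioc s t))]
    · rw [htr]; linarith [ENNReal.toReal_nonneg (a := μ (Ioc s t))]
  have hlip : LipschitzOnWith (Real.toNNReal M) f (Icc c d) := by
    apply LipschitzOnWith.of_dist_le_mul
    intro x hx y hy
    rcases le_total x y with h | h
    · obtain ⟨h1, h2⟩ := hmono x hx y hy h
      rw [Real.dist_eq, Real.dist_eq, abs_of_nonpos (by linarith), abs_of_nonpos (by linarith)]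
      rw [Real.coe_toNNReal M hM0]
      linarith
    · obtain ⟨h1, h2⟩ := hmono y hy x hx h
      rw [Real.dist_eq, Real.dist_eq, abs_of_nonneg (by linarith), abs_of_nonneg (by linarith)]
      rw [Real.coe_toNNReal M hM0]
      linarith
  have hcont : ContinuousOn f (Icc c d) := hlip.continuousOn
  have hμJR : 0 < (μ (Ioc c d)).toReal := ENNReal.toReal_pos hμJ.ne' hfinJ.ne
  set y := min ε (μ (Ioc c d)).toReal with hy
  have hy0 : 0 < y := lt_min hε hμJR
  have hyIcc : y ∈ Icc (f c) (f d) := by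
    rw [hfc]
    exact ⟨hy0.le, min_le_right _ _⟩
  obtain ⟨t, ht, hft⟩ := intermediate_value_Icc hcd.le hcont hyIcc
  have hft' : (μ (Ioc c t)).toReal = y := hft
  refine ⟨Ioc c t, Ioc_subset_Ioc_right ht.2, measurableSet_Ioc, ?_, ?_⟩
  · have h' : (μ (Ioc c t)).toReal > 0 := by rw [hft']; exact hy0
    exact pos_iff_ne_zero.2 (fun h => by simp [h] at h')
  · rw [hft']; exact min_le_left _ _

lemma sandwich_lower (μ : Measure ℝ) {c d : ℝ} (hcd : c < d)
    (hfinJ : μ (Ioc c d) < ⊤) (hm : 0 < sInf (ratioSet μ (Ioc c d)))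
    (hM : BddAbove (ratioSet μ (Ioc c d)))
    {K : Set ℝ} (hK : MeasurableSet K) (hKJ : K ⊆ Ioc c d) :
    ENNReal.ofReal (sInf (ratioSet μ (Ioc c d))) * volume K ≤ μ K := by
  set R := ratioSet μ (Ioc c d) with hR
  set m := sInf R with hmdef
  have hvfin : volume K < ⊤ := volK_fin hKJ
  have hμKfin : μ K < ⊤ := lt_of_le_of_lt (measure_mono hKJ) hfinJ
  rcases eq_or_ne (volume K) 0 with hv0 | hv0
  · rw [hv0, mul_zero]; exact zero_le
  have hvK : 0 < volume K := pos_iff_ne_zero.2 hv0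
  have hvK' : 0 < (volume K).toReal := ENNReal.toReal_pos hv0 hvfin.ne
  rcases eq_or_ne (μ K) 0 with h0 | h0
  · exfalso
    have hε : 0 < m * (volume K).toReal / 2 := by positivity
    obtain ⟨S, hSJ, hSmeas, hμS, hμSle⟩ := small_mu_set μ hcd hfinJ hm hM hε
    set L := K ∪ S with hLdef
    have hLJ : L ⊆ Ioc c d := union_subset hKJ hSJ
    have hLmeas : MeasurableSet L := hK.union hSmeas
    have hμL : 0 < μ L := lt_of_lt_of_le hμS (measure_mono subset_union_right)
    have hμLfin : μ L < ⊤ := lt_of_le_of_lt (measure_mono hLJ) hfinJ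
    have hμSfin : μ S < ⊤ := lt_of_le_of_lt (measure_mono hSJ) hfinJ
    have hvL : 0 < volume L := lt_of_lt_of_le hvK (measure_mono subset_union_left)
    have hvLfin : volume L < ⊤ := volK_fin hLJ
    have hmem : (μ L).toReal / (volume L).toReal ∈ R := mem_ratioSet hLJ hLmeas hvL hμL
    have hge : m ≤ (μ L).toReal / (volume L).toReal := csInf_le (bddBelow_ratioSet μ _) hmem
    have hμLle : (μ L).toReal ≤ m * (volume K).toReal / 2 := by
      have : μ L ≤ μ S := by
        calc μ L ≤ μ K + μ S := measure_union_le _ _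
          _ = μ S := by rw [h0, zero_add]
      exact le_trans (ENNReal.toReal_mono hμSfin.ne this) hμSle
    have hvKL : (volume K).toReal ≤ (volume L).toReal :=
      ENNReal.toReal_mono hvLfin.ne (measure_mono subset_union_left)
    have : (μ L).toReal / (volume L).toReal ≤ m / 2 := by
      calc (μ L).toReal / (volume L).toReal ≤ (μ L).toReal / (volume K).toReal := by
            gcongr
        _ ≤ (m * (volume K).toReal / 2) / (volume K).toReal := by gcongr
        _ = m / 2 := by field_simp
    linarith
  · have hμK : 0 < μ K := pos_iff_ne_zero.2 h0
    have hmem : (μ K).toReal / (volume K).toReal ∈ R := mem_ratioSet hKJ hK hvK hμK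
    have hge : m ≤ (μ K).toReal / (volume K).toReal := csInf_le (bddBelow_ratioSet μ _) hmem
    have h2 : m * (volume K).toReal ≤ (μ K).toReal := by
      rw [← le_div_iff₀ hvK']; exact hge
    calc ENNReal.ofReal m * volume K
        = ENNReal.ofReal m * ENNReal.ofReal (volume K).toReal := by
          rw [ENNReal.ofReal_toReal hvfin.ne]
      _ = ENNReal.ofReal (m * (volume K).toReal) := (ENNReal.ofReal_mul hm.le).symm
      _ ≤ ENNReal.ofReal (μ K).toReal := ENNReal.ofReal_le_ofReal h2
      _ = μ K := ENNReal.ofReal_toReal hμKfin.ne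

lemma integrable_id_restrict (ν : Measure ℝ) {c d : ℝ} {H' : Set ℝ}
    (hH'meas : MeasurableSet H') (hH'J : H' ⊆ Ioc c d) (hfin : ν H' < ⊤) :
    Integrable (fun t : ℝ => t) (ν.restrict H') := by
  have : IsFiniteMeasure (ν.restrict H') :=
    ⟨by rw [Measure.restrict_apply_univ]; exact hfin⟩
  apply Integrable.mono' (integrable_const (max |c| |d|))
  · exact aestronglyMeasurable_id
  · rw [ae_restrict_iff' hH'meas]
    filter_upwards with t ht
    obtain ⟨h1, h2⟩ := hH'J ht
    rw [Real.norm_eq_abs]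
    apply abs_le.2
    constructor
    · calc -max |c| |d| ≤ -|c| := by simp
        _ ≤ c := neg_abs_le c
        _ ≤ t := h1.le
    · calc t ≤ d := h2
        _ ≤ |d| := le_abs_self d
        _ ≤ max |c| |d| := le_max_right _ _

lemma integral_shift (ν : Measure ℝ) {c d : ℝ} {H' : Set ℝ}
    (hH'meas : MeasurableSet H') (hH'J : H' ⊆ Ioc c d) (hfin : ν H' < ⊤) :
    ∫ t in H', t ∂ν = (∫⁻ t in H', ENNReal.ofReal (t - c) ∂ν).toReal + c * (ν H').toReal := by
  have hint : Integrable (fun t : ℝ => t) (ν.restrict H') :=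
    integrable_id_restrict ν hH'meas hH'J hfin
  have hintc : Integrable (fun _ : ℝ => c) (ν.restrict H') := by
    have : IsFiniteMeasure (ν.restrict H') :=
      ⟨by rw [Measure.restrict_apply_univ]; exact hfin⟩
    exact integrable_const c
  have h1 : ∫ t in H', (t - c) ∂ν = (∫⁻ t in H', ENNReal.ofReal (t - c) ∂ν).toReal := by
    rw [integral_eq_lintegral_of_nonneg_ae]
    · filter_upwards [ae_restrict_mem hH'meas] with t ht
      have := (hH'J ht).1
      simp only [Pi.zero_apply]
      linarith
    · exact (continuous_id.sub continuous_const).aestronglyMeasurable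
  have h2 : ∫ t in H', (t - c) ∂ν = (∫ t in H', t ∂ν) - c * (ν H').toReal := by
    rw [integral_sub hint hintc, setIntegral_const, smul_eq_mul, mul_comm, measureReal_def]
  rw [h2] at h1
  linarith

lemma key_bound (μ : Measure ℝ) {c d : ℝ} (hcd : c < d)
    (hfinJ : μ (Ioc c d) < ⊤) (hm : 0 < sInf (ratioSet μ (Ioc c d)))
    (hM : BddAbove (ratioSet μ (Ioc c d)))
    {H' : Set ℝ} (hH'meas : MeasurableSet H') (hH'J : H' ⊆ Ioc c d)
    (hv : 0 < volume H') :
    |meanByMeasure μ H' - avg H'| ≤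
      (sSup (ratioSet μ (Ioc c d)) / sInf (ratioSet μ (Ioc c d)) - 1) * (d - c) := by
  set R := ratioSet μ (Ioc c d) with hR
  set m := sInf R with hmdef
  set M := sSup R with hMdef
  have hne : R.Nonempty := ratioSet_nonempty hm
  have hmM : m ≤ M := csInf_le_csSup hne (bddBelow_ratioSet μ _) hM
  have hvfin : volume H' < ⊤ := volK_fin hH'J
  have hμfin : μ H' < ⊤ := lt_of_le_of_lt (measure_mono hH'J) hfinJ
  -- measure sandwich on subsets of H'
  have hupK : μ H' ≤ ENNReal.ofReal M * volume H' := sandwich_upper μ hcd hfinJ hM hH'meas hH'J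
  have hloK : ENNReal.ofReal m * volume H' ≤ μ H' := sandwich_lower μ hcd hfinJ hm hM hH'meas hH'J
  have hμpos : 0 < μ H' := by
    apply lt_of_lt_of_le _ hloK
    exact ENNReal.mul_pos (by simp [ENNReal.ofReal_pos, hm]) hv.ne'
  -- measure inequalities as measures
  have hle1 : μ.restrict H' ≤ ENNReal.ofReal M • volume.restrict H' := by
    rw [Measure.le_iff]
    intro s hs
    rw [Measure.restrict_apply hs, Measure.smul_apply, Measure.restrict_apply hs, smul_eq_mul]
    exact sandwich_upper μ hcd hfinJ hM (hs.inter hH'meas) (inter_subset_right.trans hH'J)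
  have hle2 : ENNReal.ofReal m • volume.restrict H' ≤ μ.restrict H' := by
    rw [Measure.le_iff]
    intro s hs
    rw [Measure.restrict_apply hs, Measure.smul_apply, Measure.restrict_apply hs, smul_eq_mul]
    exact sandwich_lower μ hcd hfinJ hm hM (hs.inter hH'meas) (inter_subset_right.trans hH'J)
  set A := ∫⁻ t in H', ENNReal.ofReal (t - c) ∂μ with hA
  set B := ∫⁻ t in H', ENNReal.ofReal (t - c) ∂volume with hB
  have hAB1 : A ≤ ENNReal.ofReal M * B := by
    rw [hA, hB, ← smul_eq_mul, ← lintegral_smul_measure]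
    exact lintegral_mono' hle1 le_rfl
  have hAB2 : ENNReal.ofReal m * B ≤ A := by
    rw [hA, hB, ← smul_eq_mul, ← lintegral_smul_measure]
    exact lintegral_mono' hle2 le_rfl
  have hBle : B ≤ ENNReal.ofReal (d - c) * volume H' := by
    rw [hB, ← setLIntegral_const H' (ENNReal.ofReal (d - c))]
    apply setLIntegral_mono measurable_const
    intro t ht
    exact ENNReal.ofReal_le_ofReal (by linarith [(hH'J ht).2])
  have hBfin : B < ⊤ :=
    lt_of_le_of_lt hBle (ENNReal.mul_lt_top ENNReal.ofReal_lt_top hvfin)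
  have hAfin : A < ⊤ :=
    lt_of_le_of_lt hAB1 (ENNReal.mul_lt_top ENNReal.ofReal_lt_top hBfin)
  set a := A.toReal with ha
  set b := B.toReal with hb
  set u := (μ H').toReal with hu
  set v := (volume H').toReal with hv'
  have hvpos : 0 < v := ENNReal.toReal_pos hv.ne' hvfin.ne
  have hupos : 0 < u := ENNReal.toReal_pos hμpos.ne' hμfin.ne
  have h1 : m * b ≤ a := by
    have := ENNReal.toReal_mono hAfin.ne hAB2
    rwa [ENNReal.toReal_mul, ENNReal.toReal_ofReal hm.le] at this
  have h2 : a ≤ M * b := by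
    have := ENNReal.toReal_mono (ENNReal.mul_lt_top ENNReal.ofReal_lt_top hBfin).ne hAB1
    rwa [ENNReal.toReal_mul, ENNReal.toReal_ofReal (hm.le.trans hmM)] at this
  have h3 : m * v ≤ u := by
    have := ENNReal.toReal_mono hμfin.ne hloK
    rwa [ENNReal.toReal_mul, ENNReal.toReal_ofReal hm.le] at this
  have h4 : u ≤ M * v := by
    have := ENNReal.toReal_mono (ENNReal.mul_lt_top ENNReal.ofReal_lt_top hvfin).ne hupK
    rwa [ENNReal.toReal_mul, ENNReal.toReal_ofReal (hm.le.trans hmM)] at this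
  have hb0 : 0 ≤ b := ENNReal.toReal_nonneg
  have hbL : b ≤ (d - c) * v := by
    have := ENNReal.toReal_mono (ENNReal.mul_lt_top ENNReal.ofReal_lt_top hvfin).ne hBle
    rwa [ENNReal.toReal_mul, ENNReal.toReal_ofReal (by linarith : (0:ℝ) ≤ d - c)] at this
  -- identify the means
  have hmean : meanByMeasure μ H' = a / u + c := by
    rw [meanByMeasure, integral_shift μ hH'meas hH'J hμfin, ← hA, ← ha, ← hu]
    field_simp
  have havg : avg H' = b / v + c := by
    rw [avg, integral_shift volume hH'meas hH'J hvfin, ← hB, ← hb, ← hv']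
    field_simp
  rw [hmean, havg]
  have : a / u + c - (b / v + c) = a / u - b / v := by ring
  rw [this]
  exact algebra_bound hm hmM h1 h2 h3 h4 hvpos hb0 hbL

theorem meanByMeasure_tendsto_avg_at_infinity (μ : Measure ℝ)
    (hsupp : μ (Iic 0) = 0)
    (hfin : ∀ B : Set ℝ, Bornology.IsBounded B → MeasurableSet B → μ B < ⊤)
    (hmM : ∀ I : Set ℝ, I.OrdConnected → I ⊆ Ioi 0 → Bornology.IsBounded I →
      (∃ p ∈ I, ∃ q ∈ I, p < q) →
      0 < sInf (ratioSet μ I) ∧ BddAbove (ratioSet μ I))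
    (hlim : ∀ I : Set ℝ, I.OrdConnected → I ⊆ Ioi 0 → Bornology.IsBounded I →
      (∃ p ∈ I, ∃ q ∈ I, p < q) →
      Tendsto (fun x : ℝ =>
          sSup (ratioSet μ ((fun t => t + x) '' I)) /
            sInf (ratioSet μ ((fun t => t + x) '' I)))
        atTop (𝓝 1)) :
    ∀ H : Set ℝ, H ⊆ Ioi 0 → Bornology.IsBounded H → MeasurableSet H →
      0 < volume H → 0 < μ H → μ H < ⊤ →
      Tendsto (fun x : ℝ =>
          |meanByMeasure μ ((fun h => h + x) '' H) - avg ((fun h => h + x) '' H)|)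
        atTop (𝓝 0) := by
  intro H hH0 hHb hHmeas hvH hμH hμHfin
  obtain ⟨r, hr⟩ := hHb.subset_closedBall 0
  set b := max r 1 with hbdef
  have hb : 0 < b := lt_of_lt_of_le one_pos (le_max_right _ _)
  have hHsub : H ⊆ Ioc 0 b := by
    intro t ht
    refine ⟨hH0 ht, ?_⟩
    have := hr ht
    rw [Metric.mem_closedBall, Real.dist_eq, sub_zero] at this
    exact le_trans (le_abs_self t) (le_trans this (le_max_left _ _))
  -- facts about the interval I = Ioc 0 b
  have hIord : (Ioc (0:ℝ) b).OrdConnected := ordConnected_Ioc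
  have hIsub : Ioc (0:ℝ) b ⊆ Ioi 0 := Ioc_subset_Ioi_self
  have hIbd : Bornology.IsBounded (Ioc (0:ℝ) b) := Metric.isBounded_Ioc 0 b
  have hInd : ∃ p ∈ Ioc (0:ℝ) b, ∃ q ∈ Ioc (0:ℝ) b, p < q :=
    ⟨b / 2, ⟨by linarith, by linarith⟩, b, ⟨hb, le_refl b⟩, by linarith⟩
  have hT : Tendsto (fun x : ℝ =>
      (sSup (ratioSet μ ((fun t => t + x) '' Ioc 0 b)) /
        sInf (ratioSet μ ((fun t => t + x) '' Ioc 0 b)) - 1) * b) atTop (𝓝 0) := by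
    have := ((hlim (Ioc 0 b) hIord hIsub hIbd hInd).sub_const 1).mul_const b
    simpa using this
  apply squeeze_zero' (Eventually.of_forall (fun x => abs_nonneg _)) _ hT
  filter_upwards [eventually_ge_atTop (0:ℝ)] with x hx
  -- identify the translated interval
  have hIoc : (fun t => t + x) '' Ioc 0 b = Ioc x (b + x) := by
    rw [image_add_const_Ioc, zero_add]
  have hcd : x < b + x := by linarith
  have hfinJ : μ (Ioc x (b + x)) < ⊤ :=
    hfin _ (Metric.isBounded_Ioc x (b + x)) measurableSet_Ioc
  have hmMx := hmM (Ioc x (b + x)) ordConnected_Ioc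
    (fun t ht => lt_of_le_of_lt hx ht.1) (Metric.isBounded_Ioc x (b + x))
    ⟨x + b / 2, ⟨by linarith, by linarith⟩, b + x, ⟨hcd, le_refl _⟩, by linarith⟩
  -- the translated set
  have hpre : (fun h => h + x) '' H = (fun y => y - x) ⁻¹' H := by
    ext y
    simp only [mem_image, mem_preimage]
    constructor
    · rintro ⟨h, hh, rfl⟩; simpa using hh
    · intro hy; exact ⟨y - x, hy, by ring⟩
  have hH'meas : MeasurableSet ((fun h => h + x) '' H) := by
    rw [hpre]
    exact (measurable_id.sub measurable_const) hHmeas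
  have hH'sub : (fun h => h + x) '' H ⊆ Ioc x (b + x) := by
    rw [← hIoc]
    exact image_mono hHsub
  have hH'vol : 0 < volume ((fun h => h + x) '' H) := by
    rw [hpre]
    have : (fun y : ℝ => y - x) = (fun y : ℝ => y + (-x)) := by
      funext y; ring
    rw [this, measure_preimage_add_right]
    exact hvH
  have := key_bound μ hcd hfinJ hmMx.1 hmMx.2 hH'meas hH'sub hH'vol
  calc |meanByMeasure μ ((fun h => h + x) '' H) - avg ((fun h => h + x) '' H)|
      ≤ (sSup (ratioSet μ (Ioc x (b + x))) / sInf (ratioSet μ (Ioc x (b + x))) - 1)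
        * (b + x - x) := this
    _ = (sSup (ratioSet μ ((fun t => t + x) '' Ioc 0 b)) /
        sInf (ratioSet μ ((fun t => t + x) '' Ioc 0 b)) - 1) * b := by
        rw [hIoc]; ring_nf
end

section
/- Let H ⊆ (0,∞) be a bounded Borel set with λ(H) > 0 and ∫_H t^{-3/2} dλ(t) < ∞. Then lim_{x→+∞} [ (∫_{H+x} t^{-1/2} dλ(t)) / (∫_{H+x} t^{-3/2} dλ(t)) − ( (∫_H t dλ(t))/λ(H) + x ) ] = 0, where H + x = {h + x : h ∈ H}. That is, |M^{μ_G}(H+x) − Avg(H+x)| → 0 as x → +∞: in the far distance the generalized geometric mean behaves like the arithmetic mean. -/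
open MeasureTheory Set Filter Topology

theorem geometric_mean_tendsto_arithmetic_at_infinity (H : Set ℝ)
    (hH : H ⊆ Ioi 0) (hHb : Bornology.IsBounded H) (hHm : MeasurableSet H)
    (hpos : 0 < volume H)
    (hint : IntegrableOn (fun t : ℝ => t ^ (-(3 : ℝ) / 2)) H volume) :
    Tendsto (fun x : ℝ =>
        (∫ t in (fun h => h + x) '' H, t ^ (-(1 : ℝ) / 2)) /
            (∫ t in (fun h => h + x) '' H, t ^ (-(3 : ℝ) / 2)) -
          ((∫ t in H, t) / (volume H).toReal + x))
      atTop (𝓝 0) := by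
  obtain ⟨M, hM⟩ := hHb.exists_norm_le
  have hHfin : volume H ≠ ⊤ := hHb.measure_lt_top.ne
  set A : ℝ := (∫ t in H, t) / (volume H).toReal with hA
  -- bounds on elements of H
  have hmemb : ∀ t ∈ H, 0 < t ∧ t ≤ M := fun t ht =>
    ⟨hH ht, (le_abs_self t).trans ((Real.norm_eq_abs t) ▸ hM t ht)⟩
  -- measurability helper
  have meas : ∀ (p x : ℝ),
      AEStronglyMeasurable (fun t : ℝ => (t + x) ^ p) (volume : Measure ℝ) :=
    fun p x => ((measurable_id.add_const x).pow_const p).aestronglyMeasurable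
  -- change of variables
  have key : ∀ (x : ℝ) (φ : ℝ → ℝ),
      (∫ t in (fun h => h + x) '' H, φ t) = ∫ t in H, φ (t + x) := by
    intro x φ
    have he : MeasurableEmbedding (fun h : ℝ => h + x) :=
      (Homeomorph.addRight x).measurableEmbedding
    have h2 : (∫ t in (fun h : ℝ => h + x) '' H, φ t ∂(Measure.map (fun h : ℝ => h + x) volume))
        = ∫ t in (fun h : ℝ => h + x) ⁻¹' ((fun h : ℝ => h + x) '' H), φ (t + x) ∂volume :=
      he.setIntegral_map φ _
    rw [map_add_right_eq_self] at h2
    rw [h2, Set.preimage_image_eq H he.injective]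
  -- integrability for x ≥ 1
  have hint32 : ∀ x : ℝ, 1 ≤ x →
      IntegrableOn (fun t : ℝ => (t + x) ^ (-(3 : ℝ) / 2)) H volume := by
    intro x hx
    refine Measure.integrableOn_of_bounded (M := 1) hHfin (meas _ _) ?_
    filter_upwards [ae_restrict_mem hHm] with t ht
    have h1 : (1 : ℝ) ≤ t + x := by linarith [(hmemb t ht).1]
    rw [Real.norm_eq_abs, abs_of_nonneg (Real.rpow_nonneg (by linarith) _)]
    calc (t + x) ^ (-(3 : ℝ) / 2) ≤ (t + x) ^ (0 : ℝ) :=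
          Real.rpow_le_rpow_of_exponent_le h1 (by norm_num)
      _ = 1 := Real.rpow_zero _
  have hintP : ∀ x : ℝ, 1 ≤ x →
      IntegrableOn (fun t : ℝ => t * (t + x) ^ (-(3 : ℝ) / 2)) H volume := by
    intro x hx
    refine Measure.integrableOn_of_bounded (M := M) hHfin
      (measurable_id.aestronglyMeasurable.mul (meas _ _)) ?_
    filter_upwards [ae_restrict_mem hHm] with t ht
    obtain ⟨ht0, htM⟩ := hmemb t ht
    have h1 : (1 : ℝ) ≤ t + x := by linarith
    have hb : (t + x) ^ (-(3 : ℝ) / 2) ≤ 1 := by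
      calc (t + x) ^ (-(3 : ℝ) / 2) ≤ (t + x) ^ (0 : ℝ) :=
            Real.rpow_le_rpow_of_exponent_le h1 (by norm_num)
        _ = 1 := Real.rpow_zero _
    have hnn : 0 ≤ (t + x) ^ (-(3 : ℝ) / 2) := Real.rpow_nonneg (by linarith) _
    rw [Real.norm_eq_abs, abs_of_nonneg (mul_nonneg ht0.le hnn)]
    calc t * (t + x) ^ (-(3 : ℝ) / 2) ≤ t * 1 := by
          exact mul_le_mul_of_nonneg_left hb ht0.le
      _ = t := mul_one t
      _ ≤ M := htM
  -- positivity of the denominator integral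
  have hDpos : ∀ x : ℝ, 1 ≤ x → 0 < ∫ t in H, (t + x) ^ (-(3 : ℝ) / 2) := by
    intro x hx
    have hnn : 0 ≤ᵐ[volume.restrict H] fun t : ℝ => (t + x) ^ (-(3 : ℝ) / 2) := by
      filter_upwards [ae_restrict_mem hHm] with t ht
      exact Real.rpow_nonneg (by linarith [(hmemb t ht).1]) _
    rw [setIntegral_pos_iff_support_of_nonneg_ae hnn (hint32 x hx)]
    have hsub : H ⊆ Function.support fun t : ℝ => (t + x) ^ (-(3 : ℝ) / 2) := by
      intro t ht
      exact (Real.rpow_pos_of_pos (by linarith [(hmemb t ht).1]) _).ne'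
    calc 0 < volume H := hpos
      _ = volume (Function.support (fun t : ℝ => (t + x) ^ (-(3 : ℝ) / 2)) ∩ H) := by
          rw [Set.inter_eq_right.mpr hsub]
  -- the rescaled integrals
  set u : ℝ → ℝ := fun x => ∫ t in H, (x / (t + x)) ^ ((3 : ℝ) / 2) with hu
  set v : ℝ → ℝ := fun x => ∫ t in H, t * (x / (t + x)) ^ ((3 : ℝ) / 2) with hv
  -- relation between (x/(t+x))^(3/2) and x^(3/2) * (t+x)^(-3/2)
  have hrel : ∀ x : ℝ, 1 ≤ x → ∀ t ∈ H,
      (x / (t + x)) ^ ((3 : ℝ) / 2) = x ^ ((3 : ℝ) / 2) * (t + x) ^ (-(3 : ℝ) / 2) := by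
    intro x hx t ht
    have ht0 := (hmemb t ht).1
    have hx0 : (0 : ℝ) < x := by linarith
    have htx : (0 : ℝ) < t + x := by linarith
    rw [show (-(3:ℝ)/2) = -((3:ℝ)/2) by norm_num, Real.div_rpow hx0.le htx.le,
      Real.rpow_neg htx.le, div_eq_mul_inv]
  have hurel : ∀ x : ℝ, 1 ≤ x →
      u x = x ^ ((3 : ℝ) / 2) * ∫ t in H, (t + x) ^ (-(3 : ℝ) / 2) := by
    intro x hx
    rw [hu]
    simp only
    rw [setIntegral_congr_fun hHm (fun t ht => hrel x hx t ht), integral_const_mul]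
  have hvrel : ∀ x : ℝ, 1 ≤ x →
      v x = x ^ ((3 : ℝ) / 2) * ∫ t in H, t * (t + x) ^ (-(3 : ℝ) / 2) := by
    intro x hx
    rw [hv]
    simp only
    rw [setIntegral_congr_fun hHm (fun t ht => show
        t * (x / (t + x)) ^ ((3:ℝ)/2) = x ^ ((3:ℝ)/2) * (t * (t + x) ^ (-(3:ℝ)/2)) by
      rw [hrel x hx t ht]; ring), integral_const_mul]
  -- limits via dominated convergence
  have hfrac : ∀ t : ℝ, 0 < t →
      Tendsto (fun x : ℝ => (x / (t + x)) ^ ((3 : ℝ) / 2)) atTop (𝓝 1) := by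
    intro t ht
    have h1 : Tendsto (fun x : ℝ => x / (t + x)) atTop (𝓝 1) := by
      have h0 : Tendsto (fun x : ℝ => t / (t + x)) atTop (𝓝 0) :=
        tendsto_const_nhds.div_atTop (tendsto_atTop_add_const_left _ t tendsto_id)
      have h2 : Tendsto (fun x : ℝ => 1 - t / (t + x)) atTop (𝓝 1) := by
        simpa using (tendsto_const_nhds (x := (1:ℝ)) (f := atTop)).sub h0
      refine h2.congr' ?_
      filter_upwards [eventually_gt_atTop 0] with x hx
      have hne : t + x ≠ 0 := by positivity
      field_simp
      ring
    have hc : ContinuousAt (fun y : ℝ => y ^ ((3 : ℝ) / 2)) 1 :=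
      Real.continuousAt_rpow_const 1 _ (Or.inl one_ne_zero)
    have := hc.tendsto.comp h1
    simpa [Function.comp_def] using this
  have hbound : ∀ x : ℝ, 1 ≤ x → ∀ t ∈ H, (x / (t + x)) ^ ((3 : ℝ) / 2) ∈ Icc (0:ℝ) 1 := by
    intro x hx t ht
    have ht0 := (hmemb t ht).1
    have hdiv0 : 0 ≤ x / (t + x) := div_nonneg (by linarith) (by linarith)
    have hdiv1 : x / (t + x) ≤ 1 := div_le_one_of_le₀ (by linarith) (by linarith)
    exact ⟨Real.rpow_nonneg hdiv0 _, Real.rpow_le_one hdiv0 hdiv1 (by norm_num)⟩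
  have hmeasF : ∀ x : ℝ, AEStronglyMeasurable (fun t : ℝ => (x / (t + x)) ^ ((3 : ℝ) / 2))
      (volume.restrict H) :=
    fun x => ((measurable_const.div (measurable_id.add_const x)).pow_const _).aestronglyMeasurable
  have hulim : Tendsto u atTop (𝓝 (volume H).toReal) := by
    have hone : (∫ t in H, (1 : ℝ)) = (volume H).toReal := by
      rw [setIntegral_const, smul_eq_mul, mul_one]
      rfl
    rw [hu, ← hone]
    have h1 : Tendsto (fun x : ℝ => ∫ t in H, (x / (t + x)) ^ ((3 : ℝ) / 2)) atTop
        (𝓝 (∫ t in H, (1 : ℝ))) := by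
      refine tendsto_integral_filter_of_dominated_convergence (fun _ => (1 : ℝ))
        (Eventually.of_forall fun x => hmeasF x) ?_
        (integrableOn_const hHfin) ?_
      · filter_upwards [eventually_ge_atTop (1 : ℝ)] with x hx
        filter_upwards [ae_restrict_mem hHm] with t ht
        rw [Real.norm_eq_abs, abs_of_nonneg (hbound x hx t ht).1]
        exact (hbound x hx t ht).2
      · filter_upwards [ae_restrict_mem hHm] with t ht
        exact hfrac t (hmemb t ht).1
    exact h1
  have hvlim : Tendsto v atTop (𝓝 (∫ t in H, t)) := by
    rw [hv]
    refine tendsto_integral_filter_of_dominated_convergence (fun _ => M)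
      (Eventually.of_forall fun x =>
        measurable_id.aestronglyMeasurable.mul (hmeasF x)) ?_
      (integrableOn_const hHfin) ?_
    · filter_upwards [eventually_ge_atTop (1 : ℝ)] with x hx
      filter_upwards [ae_restrict_mem hHm] with t ht
      obtain ⟨ht0, htM⟩ := hmemb t ht
      obtain ⟨hb0, hb1⟩ := hbound x hx t ht
      rw [Real.norm_eq_abs, abs_of_nonneg (mul_nonneg ht0.le hb0)]
      calc t * (x / (t + x)) ^ ((3 : ℝ) / 2) ≤ t * 1 :=
            mul_le_mul_of_nonneg_left hb1 ht0.le
        _ = t := mul_one t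
        _ ≤ M := htM
    · filter_upwards [ae_restrict_mem hHm] with t ht
      have := (hfrac t (hmemb t ht).1).const_mul t
      simpa using this
  -- quotient limit
  have hHtop : (0 : ℝ) < (volume H).toReal := ENNReal.toReal_pos hpos.ne' hHfin
  have hratio : Tendsto (fun x => v x / u x) atTop (𝓝 A) := by
    rw [hA]
    exact hvlim.div hulim hHtop.ne'
  have hfinal : Tendsto (fun x => v x / u x - A) atTop (𝓝 0) := by
    have := hratio.sub_const A
    simpa using this
  refine hfinal.congr' ?_
  filter_upwards [eventually_ge_atTop (1 : ℝ)] with x hx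
  -- now show v x / u x - A equals the original expression
  set D : ℝ := ∫ t in H, (t + x) ^ (-(3 : ℝ) / 2) with hD
  set P : ℝ := ∫ t in H, t * (t + x) ^ (-(3 : ℝ) / 2) with hP
  have hx0 : (0 : ℝ) < x := by linarith
  have hxp : (0 : ℝ) < x ^ ((3 : ℝ) / 2) := Real.rpow_pos_of_pos hx0 _
  have hDpos' : 0 < D := hDpos x hx
  -- v/u = P/D
  have hq : v x / u x = P / D := by
    rw [hurel x hx, hvrel x hx, ← hD, ← hP, mul_div_mul_left _ _ hxp.ne']
  -- numerator identity : N = P + x * D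
  have hN : (∫ t in H, (t + x) ^ (-(1 : ℝ) / 2)) = P + x * D := by
    have hcong : ∀ t ∈ H, (t + x) ^ (-(1 : ℝ) / 2)
        = t * (t + x) ^ (-(3 : ℝ) / 2) + x * (t + x) ^ (-(3 : ℝ) / 2) := by
      intro t ht
      have htx : (0 : ℝ) < t + x := by linarith [(hmemb t ht).1]
      have : (t + x) ^ (-(1 : ℝ) / 2) = (t + x) ^ (1 + -(3 : ℝ) / 2) := by norm_num
      rw [this, Real.rpow_add htx, Real.rpow_one]
      ring
    rw [setIntegral_congr_fun hHm hcong,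
      integral_add (hintP x hx) ((hint32 x hx).const_mul x), integral_const_mul, ← hD, ← hP]
  -- change of variables for both integrals
  have hNe : (∫ t in (fun h => h + x) '' H, t ^ (-(1 : ℝ) / 2))
      = ∫ t in H, (t + x) ^ (-(1 : ℝ) / 2) := key x _
  have hDe : (∫ t in (fun h => h + x) '' H, t ^ (-(3 : ℝ) / 2)) = D := key x _
  rw [hq, hNe, hDe, hN, add_div, mul_div_assoc, div_self hDpos'.ne', mul_one]
  ring
end
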